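/- arXiv:2305.17363 — 5 statements merged into one kernel-verified Lean document; each statement's English description precedes it below -/
import Mathlib

section
/- Fix β > 0 and set λ = 0. Then the system F(c, r, u, v, β, 0) = 0 has exactly one solution (c, r, u, v) ∈ ℝ × ℝ × M × M, namely c = c₀ = ∑_{j=1}^n a_j, r = r_{0β} = β(∑_{j=1}^n b_jξ_j)/((∑_{j=1}^n a_j)(∑_{j=1}^n ξ_j²η_j)), u = 0 and v = 0. -/
open Finset Set

/-- A real square matrix is essentially nonnegative if all off-diagonal entries
are nonnegative. -/
def EssNonneg {n : ℕ} (P : Matrix (Fin n) (Fin n) ℝ) : Prop :=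
  ∀ j k, j ≠ k → 0 ≤ P j k

/-- Zero column sums. -/
def ZeroColSums {n : ℕ} (P : Matrix (Fin n) (Fin n) ℝ) : Prop :=
  ∀ k, ∑ j, P j k = 0

/-- Irreducibility of a matrix. -/
def MatIrred {n : ℕ} (P : Matrix (Fin n) (Fin n) ℝ) : Prop :=
  ∀ S : Finset (Fin n), S.Nonempty → S ≠ Finset.univ →
    ∃ j, j ∉ S ∧ ∃ k ∈ S, P j k ≠ 0

/-- Componentwise positivity of a vector. -/
def PosVec {n : ℕ} (x : Fin n → ℝ) : Prop := ∀ j, 0 < x j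

/-- The equilibrium system (E). -/
def IsEquilib {n : ℕ} (P Q : Matrix (Fin n) (Fin n) ℝ) (a b : Fin n → ℝ)
    (θ lam β : ℝ) (x y : Fin n → ℝ) : Prop :=
  ∀ j, (∑ k, P j k * x k) + lam * (a j - (β * b j + 1) * x j + (x j) ^ 2 * y j) = 0 ∧
    θ * (∑ k, Q j k * y k) + lam * (β * b j * x j - (x j) ^ 2 * y j) = 0

/-- The linearization matrix `A_β(λ)` (as a complex `2n × 2n` matrix in block form). -/
noncomputable def Amat {n : ℕ} (P Q : Matrix (Fin n) (Fin n) ℝ) (b : Fin n → ℝ)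
    (θ lam β : ℝ) (x y : Fin n → ℝ) :
    Matrix (Fin n ⊕ Fin n) (Fin n ⊕ Fin n) ℂ :=
  Matrix.fromBlocks (P.map fun t => (t : ℂ)) 0 0 ((θ : ℂ) • Q.map fun t => (t : ℂ))
    + (lam : ℂ) • Matrix.fromBlocks
        (Matrix.diagonal fun j => ((2 * x j * y j - β * b j - 1 : ℝ) : ℂ))
        (Matrix.diagonal fun j => (((x j) ^ 2 : ℝ) : ℂ))
        (Matrix.diagonal fun j => ((β * b j - 2 * x j * y j : ℝ) : ℂ))
        (-(Matrix.diagonal fun j => (((x j) ^ 2 : ℝ) : ℂ)))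

/-- `μ` is an eigenvalue of the complex matrix `A`. -/
def IsEig {m : Type*} [Fintype m] (A : Matrix m m ℂ) (μ : ℂ) : Prop :=
  ∃ v, v ≠ 0 ∧ A.mulVec v = μ • v

/-- Component `f₁` of the map `F`. -/
def F1 {n : ℕ} (a b ξ η : Fin n → ℝ) (c r β : ℝ) (u v : Fin n → ℝ) : ℝ :=
  ∑ j, (a j - (β * b j + 1) * (c * ξ j + u j)
    + (c * ξ j + u j) ^ 2 * (r * η j + v j))

/-- Component `f_{2j}` of the map `F`. -/
noncomputable def F2 {n : ℕ} (P : Matrix (Fin n) (Fin n) ℝ) (a b ξ η : Fin n → ℝ)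
    (c r β lam : ℝ) (u v : Fin n → ℝ) (j : Fin n) : ℝ :=
  lam * (a j - (β * b j + 1) * (c * ξ j + u j)
      + (c * ξ j + u j) ^ 2 * (r * η j + v j))
    + (∑ k, P j k * u k) - lam / n * F1 a b ξ η c r β u v

/-- Component `f₃` of the map `F`. -/
def F3 {n : ℕ} (b ξ η : Fin n → ℝ) (c r β : ℝ) (u v : Fin n → ℝ) : ℝ :=
  ∑ j, (β * b j * (c * ξ j + u j) - (c * ξ j + u j) ^ 2 * (r * η j + v j))

/-- Component `f_{4j}` of the map `F`. -/
noncomputable def F4 {n : ℕ} (Q : Matrix (Fin n) (Fin n) ℝ) (b ξ η : Fin n → ℝ)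
    (θ c r β lam : ℝ) (u v : Fin n → ℝ) (j : Fin n) : ℝ :=
  lam * (β * b j * (c * ξ j + u j) - (c * ξ j + u j) ^ 2 * (r * η j + v j))
    + θ * (∑ k, Q j k * v k) - lam / n * F3 b ξ η c r β u v

/-!
For `λ = 0` the equations `f_{2j} = 0`, `f_{4j} = 0` say `P u = 0`, `Q v = 0`. If `P u = 0` and
`t = maxⱼ uⱼ / ξⱼ`, then `w = u - t ξ` is `≤ 0`, vanishes somewhere and satisfies `P w = 0`;
irreducibility together with the sign pattern of `P` spreads the zero to all of `w`. So the kernel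
of `P` is spanned by `ξ`, and `u ∈ M` forces `u = 0`; likewise `v = 0`. Then `f₁ + f₃ = ∑ aⱼ - c`
pins down `c`, and `f₃ = c (β ∑ bⱼξⱼ - c r ∑ ξⱼ²ηⱼ)` pins down `r`.
-/

open scoped Matrix

section Kernel

variable {n : ℕ} {P : Matrix (Fin n) (Fin n) ℝ}

theorem MatIrred.eq_zero_of_nonpos_of_mulVec_eq_zero (hirr : MatIrred P) (hess : EssNonneg P)
    {w : Fin n → ℝ} (hw : ∀ j, w j ≤ 0) (hPw : P *ᵥ w = 0) {j₀ : Fin n} (hj₀ : w j₀ = 0) :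
    w = 0 := by
  by_contra hne
  set T := Finset.univ.filter fun j => w j ≠ 0
  have hTne : T.Nonempty := by
    obtain ⟨m, hm⟩ := Function.ne_iff.mp hne
    exact ⟨m, by simpa [T] using hm⟩
  have hT : T ≠ Finset.univ := fun h => by simpa [T, hj₀] using h.ge (Finset.mem_univ j₀)
  obtain ⟨j, hjT, k, hkT, hPjk⟩ := hirr T hTne hT
  have hwj : w j = 0 := by simpa [T] using hjT
  -- Row `j` of `P w = 0` is a sum of nonpositive terms, one of which, `P j k * w k`, is nonzero.
  have hterms : ∀ m, P j m * w m ≤ 0 := by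
    intro m
    rcases eq_or_ne m j with rfl | hmj
    · simp [hwj]
    · exact mul_nonpos_of_nonneg_of_nonpos (hess j m hmj.symm) (hw m)
  have hrow : ∑ m, P j m * w m = 0 := congrFun hPw j
  have hk := (sum_eq_zero_iff_of_nonpos fun m _ => hterms m).mp hrow k (Finset.mem_univ k)
  exact mul_ne_zero hPjk (by simpa [T] using hkT) hk

theorem MatIrred.exists_eq_smul_of_mulVec_eq_zero (hirr : MatIrred P) (hess : EssNonneg P)
    {ξ u : Fin n → ℝ} (hξ : PosVec ξ) (hPξ : P *ᵥ ξ = 0) (hPu : P *ᵥ u = 0) :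
    ∃ t : ℝ, u = t • ξ := by
  rcases isEmpty_or_nonempty (Fin n) with _ | _
  · exact ⟨0, Subsingleton.elim _ _⟩
  obtain ⟨j₀, -, hmax⟩ := exists_max_image univ (fun j => u j / ξ j) Finset.univ_nonempty
  refine ⟨u j₀ / ξ j₀, sub_eq_zero.mp (hirr.eq_zero_of_nonpos_of_mulVec_eq_zero hess
    (j₀ := j₀) (fun j => ?_) ?_ ?_)⟩
  · have := (div_le_iff₀ (hξ j)).mp (hmax j (mem_univ j))
    simp only [Pi.sub_apply, Pi.smul_apply, smul_eq_mul]
    linarith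
  · rw [Matrix.mulVec_sub, Matrix.mulVec_smul, hPξ, hPu, smul_zero, sub_zero]
  · simp [div_mul_cancel₀ _ (hξ j₀).ne']

theorem MatIrred.eq_zero_of_mulVec_eq_zero (hirr : MatIrred P) (hess : EssNonneg P)
    {ξ u : Fin n → ℝ} (hξ : PosVec ξ) (hPξ : P *ᵥ ξ = 0) (hξsum : ∑ j, ξ j ≠ 0)
    (hPu : P *ᵥ u = 0) (hu : ∑ j, u j = 0) : u = 0 := by
  obtain ⟨t, rfl⟩ := hirr.exists_eq_smul_of_mulVec_eq_zero hess hξ hPξ hPu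
  simp only [Pi.smul_apply, smul_eq_mul, ← mul_sum, mul_eq_zero, hξsum, or_false] at hu
  rw [hu, zero_smul]

end Kernel

section Components

variable {n : ℕ} (P Q : Matrix (Fin n) (Fin n) ℝ) (a b ξ η : Fin n → ℝ) (θ c r β : ℝ)
  (u v : Fin n → ℝ)

theorem F2_lam_zero (j : Fin n) : F2 P a b ξ η c r β 0 u v j = (P *ᵥ u) j := by
  simp [F2, Matrix.mulVec, dotProduct]

theorem F4_lam_zero (j : Fin n) : F4 Q b ξ η θ c r β 0 u v j = θ * (Q *ᵥ v) j := by
  simp [F4, Matrix.mulVec, dotProduct]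

theorem F1_add_F3 :
    F1 a b ξ η c r β u v + F3 b ξ η c r β u v = ∑ j, a j - ∑ j, (c * ξ j + u j) := by
  rw [F1, F3, ← sum_add_distrib, ← sum_sub_distrib]
  exact sum_congr rfl fun j _ => by ring

theorem F3_zero :
    F3 b ξ η c r β 0 0 = c * (β * ∑ j, b j * ξ j - c * r * ∑ j, ξ j ^ 2 * η j) := by
  rw [F3, mul_sum, mul_sum, ← sum_sub_distrib, mul_sum]
  exact sum_congr rfl fun j _ => by simp only [Pi.zero_apply, add_zero]; ring

end Components

theorem stmt_0_general (n : ℕ)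
    (P Q : Matrix (Fin n) (Fin n) ℝ) (a b ξ η : Fin n → ℝ) (θ : ℝ)
    (ha : ∀ j, 0 < a j) (hθ : 0 < θ)
    (hPirr : MatIrred P) (hQirr : MatIrred Q)
    (hPess : EssNonneg P) (hQess : EssNonneg Q)
    (hξpos : PosVec ξ) (hηpos : PosVec η)
    (hPξ : P.mulVec ξ = 0) (hQη : Q.mulVec η = 0)
    (hξsum : ∑ j, ξ j = 1) (hηsum : ∑ j, η j = 1)
    (β : ℝ) :
    ∀ (c r : ℝ) (u v : Fin n → ℝ),
      ((∑ j, u j = 0) ∧ (∑ j, v j = 0) ∧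
        F1 a b ξ η c r β u v = 0 ∧
        (∀ j, F2 P a b ξ η c r β 0 u v j = 0) ∧
        F3 b ξ η c r β u v = 0 ∧
        (∀ j, F4 Q b ξ η θ c r β 0 u v j = 0)) ↔
      (c = ∑ j, a j ∧
        r = β * (∑ j, b j * ξ j) / ((∑ j, a j) * (∑ j, (ξ j) ^ 2 * η j)) ∧
        u = 0 ∧ v = 0) := by
  intro c r u v
  have hξsum' : ∑ j, ξ j ≠ 0 := by simp [hξsum]
  have hne : (univ : Finset (Fin n)).Nonempty := nonempty_of_sum_ne_zero hξsum'
  have hA : ∑ j, a j ≠ 0 := (sum_pos (fun j _ => ha j) hne).ne'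
  have hE : ∑ j, ξ j ^ 2 * η j ≠ 0 :=
    (sum_pos (fun j _ => mul_pos (pow_pos (hξpos j) 2) (hηpos j)) hne).ne'
  have hsum := F1_add_F3 a b ξ η c r β 0 0
  simp only [Pi.zero_apply, add_zero, ← mul_sum, hξsum, mul_one] at hsum
  constructor
  · rintro ⟨hu, hv, hF1, hF2, hF3, hF4⟩
    obtain rfl : u = 0 := hPirr.eq_zero_of_mulVec_eq_zero hPess hξpos hPξ hξsum'
      (funext fun j => by simpa [F2_lam_zero] using hF2 j) hu
    obtain rfl : v = 0 := hQirr.eq_zero_of_mulVec_eq_zero hQess hηpos hQη (by simp [hηsum])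
      (funext fun j => by simpa [F4_lam_zero, hθ.ne'] using hF4 j) hv
    have hc : c = ∑ j, a j := by linarith
    rw [F3_zero, hc] at hF3
    refine ⟨hc, ?_, rfl, rfl⟩
    rw [eq_div_iff (mul_ne_zero hA hE)]
    linear_combination -((mul_eq_zero.mp hF3).resolve_left hA)
  · rintro ⟨rfl, rfl, rfl, rfl⟩
    have hF3 : F3 b ξ η (∑ j, a j)
        (β * (∑ j, b j * ξ j) / ((∑ j, a j) * (∑ j, ξ j ^ 2 * η j))) β 0 0 = 0 := by
      rw [F3_zero]
      field_simp
      ring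
    refine ⟨by simp, by simp, by linarith, fun j => by simp [F2_lam_zero], hF3,
      fun j => by simp [F4_lam_zero]⟩

/-- For fixed `β > 0` and `λ = 0`, the system `F(c,r,u,v,β,0) = 0` with
`u, v ∈ M` has exactly one solution, namely
`c = c₀ = ∑ aⱼ`, `r = r_{0β}`, `u = 0`, `v = 0`. -/
theorem stmt_0 (n : ℕ) (hn : 2 ≤ n)
    (P Q : Matrix (Fin n) (Fin n) ℝ) (a b ξ η : Fin n → ℝ) (θ : ℝ)
    (ha : ∀ j, 0 < a j) (hb : ∀ j, 0 < b j) (hθ : 0 < θ)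
    (hPirr : MatIrred P) (hQirr : MatIrred Q)
    (hPess : EssNonneg P) (hQess : EssNonneg Q)
    (hPcol : ZeroColSums P) (hQcol : ZeroColSums Q)
    (hξpos : PosVec ξ) (hηpos : PosVec η)
    (hPξ : P.mulVec ξ = 0) (hQη : Q.mulVec η = 0)
    (hξsum : ∑ j, ξ j = 1) (hηsum : ∑ j, η j = 1)
    (β : ℝ) (hβ : 0 < β) :
    ∀ (c r : ℝ) (u v : Fin n → ℝ),
      ((∑ j, u j = 0) ∧ (∑ j, v j = 0) ∧
        F1 a b ξ η c r β u v = 0 ∧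
        (∀ j, F2 P a b ξ η c r β 0 u v j = 0) ∧
        F3 b ξ η c r β u v = 0 ∧
        (∀ j, F4 Q b ξ η θ c r β 0 u v j = 0)) ↔
      (c = ∑ j, a j ∧
        r = β * (∑ j, b j * ξ j) / ((∑ j, a j) * (∑ j, (ξ j) ^ 2 * η j)) ∧
        u = 0 ∧ v = 0) :=
  stmt_0_general n P Q a b ξ η θ ha hθ hPirr hQirr hPess hQess hξpos hηpos hPξ hQη hξsum hηsum β
end

section
/- Assume ε is small enough that β₀ ∈ (ε, 1/ε). At λ = 0, the system H(δ, s₁, s₂, w, z, ν, β, 0) = 0 with constraints δ ≥ 0, s₁, s₂ ∈ ℝ, w, z ∈ M_ℂ, ν ≥ 0, β ∈ B has exactly one solution, namely ν = ν₀ = (∑_{j=1}^n a_j)√(∑_{j=1}^n ξ_j²η_j), β = β₀ = (ν₀² + 1)/(∑_{j=1}^n b_jξ_j), w = 0, z = 0, δ = δ₀ = √((‖ξ‖₂² + ‖η‖₂²)/(‖ξ‖₂² + (1 + 1/ν₀²)‖η‖₂²)), s₁ = −δ₀ and s₂ = δ₀/ν₀. -/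
open Finset Set

/-- The bracket `M₁ⱼ(δξⱼ+wⱼ) + M₂ⱼ((s₁+is₂)ηⱼ+zⱼ)` appearing in `H`. -/
noncomputable def HB1 {n : ℕ} (b ξ η : Fin n → ℝ) (β : ℝ) (x y : Fin n → ℝ)
    (δ s1 s2 : ℝ) (w z : Fin n → ℂ) (j : Fin n) : ℂ :=
  ((2 * x j * y j - β * b j - 1 : ℝ) : ℂ) * (((δ * ξ j : ℝ) : ℂ) + w j)
    + (((x j) ^ 2 : ℝ) : ℂ) *
      (((s1 : ℂ) + (s2 : ℂ) * Complex.I) * ((η j : ℝ) : ℂ) + z j)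

/-- The bracket `M₃ⱼ(δξⱼ+wⱼ) - M₂ⱼ((s₁+is₂)ηⱼ+zⱼ)` appearing in `H`. -/
noncomputable def HB3 {n : ℕ} (b ξ η : Fin n → ℝ) (β : ℝ) (x y : Fin n → ℝ)
    (δ s1 s2 : ℝ) (w z : Fin n → ℂ) (j : Fin n) : ℂ :=
  ((β * b j - 2 * x j * y j : ℝ) : ℂ) * (((δ * ξ j : ℝ) : ℂ) + w j)
    - (((x j) ^ 2 : ℝ) : ℂ) *
      (((s1 : ℂ) + (s2 : ℂ) * Complex.I) * ((η j : ℝ) : ℂ) + z j)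

/-- Component `h₁` of `H`. -/
noncomputable def Hh1 {n : ℕ} (b ξ η : Fin n → ℝ) (β : ℝ) (x y : Fin n → ℝ)
    (δ s1 s2 : ℝ) (w z : Fin n → ℂ) (ν : ℝ) : ℂ :=
  (∑ j, HB1 b ξ η β x y δ s1 s2 w z j) - Complex.I * (ν : ℂ) * (δ : ℂ)

/-- Component `h₃` of `H`. -/
noncomputable def Hh3 {n : ℕ} (b ξ η : Fin n → ℝ) (β : ℝ) (x y : Fin n → ℝ)
    (δ s1 s2 : ℝ) (w z : Fin n → ℂ) (ν : ℝ) : ℂ :=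
  (∑ j, HB3 b ξ η β x y δ s1 s2 w z j)
    - Complex.I * (ν : ℂ) * ((s1 : ℂ) + (s2 : ℂ) * Complex.I)

/-- The full system `H(δ, s₁, s₂, w, z, ν, β, λ) = 0`
(components `h₁`, `h_{2j}`, `h₃`, `h_{4j}`, `h₅`). -/
def HZero {n : ℕ} (P Q : Matrix (Fin n) (Fin n) ℝ) (b ξ η : Fin n → ℝ)
    (θ β lam : ℝ) (x y : Fin n → ℝ) (δ s1 s2 : ℝ) (w z : Fin n → ℂ) (ν : ℝ) : Prop :=
  Hh1 b ξ η β x y δ s1 s2 w z ν = 0 ∧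
  (∀ j, (∑ k, (P j k : ℂ) * w k) + (lam : ℂ) * HB1 b ξ η β x y δ s1 s2 w z j
      - Complex.I * (lam : ℂ) * (ν : ℂ) * (((δ * ξ j : ℝ) : ℂ) + w j)
      - (lam : ℂ) / (n : ℂ) * Hh1 b ξ η β x y δ s1 s2 w z ν = 0) ∧
  Hh3 b ξ η β x y δ s1 s2 w z ν = 0 ∧
  (∀ j, (θ : ℂ) * (∑ k, (Q j k : ℂ) * z k) + (lam : ℂ) * HB3 b ξ η β x y δ s1 s2 w z j
      - Complex.I * (lam : ℂ) * (ν : ℂ) *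
          (((s1 : ℂ) + (s2 : ℂ) * Complex.I) * ((η j : ℝ) : ℂ) + z j)
      - (lam : ℂ) / (n : ℂ) * Hh3 b ξ η β x y δ s1 s2 w z ν = 0) ∧
  (∑ j, Complex.normSq (((δ * ξ j : ℝ) : ℂ) + w j))
    + (∑ j, Complex.normSq (((s1 : ℂ) + (s2 : ℂ) * Complex.I) * ((η j : ℝ) : ℂ) + z j))
    - (∑ j, (ξ j) ^ 2) - (∑ j, (η j) ^ 2) = 0

/-!
At `λ = 0` the equations `h_{2j}`, `h_{4j}` say `Pw = 0` and `θQz = 0`. Since `P` is irreducible,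
essentially nonnegative and has zero column sums, a maximum-principle argument shows that
`ker Pᵀ` is spanned by `(1, …, 1)`, so `ker P` is the line through `ξ`; together with
`∑ wⱼ = 0` this forces `w = 0`, and likewise `z = 0`. What is left are the real and imaginary
parts of `h₁`, `h₃` and the normalisation `h₅`: five real equations whose coefficients at the
base equilibrium `x = c₀ξ`, `y = r₀βη` are `∑ M₁ⱼξⱼ = βB − 1`, `∑ M₃ⱼξⱼ = −βB` and
`∑ M₂ⱼηⱼ = ν₀²`, where `B = ∑ bⱼξⱼ`. Adding the real parts of `h₁` and `h₃` gives `δ = νs₂`;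
the imaginary parts then force `ν² = ν₀²` and `s₁ = −δ`, the real part of `h₁` gives
`βB = ν₀² + 1`, and `h₅` fixes `δ`.
-/

open scoped Matrix

namespace MatIrred

variable {n : ℕ} {P : Matrix (Fin n) (Fin n) ℝ}

/-- Maximum principle: at a maximum `k` of `u`, `(u ᵥ* P) k = ∑ i, P i k * (u i - u k)` is a
sum of nonpositive terms, and irreducibility makes one of them negative unless `u` is
constant. -/
theorem eq_of_vecMul_eq_zero (hirr : MatIrred P) (hess : EssNonneg P) (hcol : ZeroColSums P)
    {u : Fin n → ℝ} (hu : u ᵥ* P = 0) (i j : Fin n) : u i = u j := by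
  obtain ⟨m, -, hm⟩ := Finset.exists_max_image Finset.univ u ⟨i, Finset.mem_univ i⟩
  set S : Finset (Fin n) := Finset.univ.filter fun j => u j = u m
  suffices hS : S = Finset.univ by
    have hi : i ∈ S := hS ▸ Finset.mem_univ i
    have hj : j ∈ S := hS ▸ Finset.mem_univ j
    simp only [S, mem_filter, Finset.mem_univ, true_and] at hi hj
    rw [hi, hj]
  by_contra hne
  obtain ⟨j, hjS, k, hkS, hPjk⟩ := hirr S ⟨m, by simp [S]⟩ hne
  simp only [S, mem_filter, Finset.mem_univ, true_and] at hjS hkS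
  have hgap : ∀ i, P i k * (u i - u k) ≤ 0 := fun i => by
    rcases eq_or_ne i k with rfl | hik
    · simp
    · exact mul_nonpos_of_nonneg_of_nonpos (hess i k hik) (by linarith [hm i (Finset.mem_univ i)])
  have hsum : ∑ i, P i k * (u i - u k) = 0 := by
    have hk : ∑ i, u i * P i k = 0 := congrFun hu k
    simp only [mul_sub, sum_sub_distrib, ← sum_mul, hcol k, zero_mul, sub_zero]
    simpa only [mul_comm] using hk
  have hzero : P j k * (u j - u k) = 0 :=
    (sum_eq_zero_iff_of_nonpos fun i _ => hgap i).1 hsum j (Finset.mem_univ j)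
  have hjk : j ≠ k := by rintro rfl; exact hjS hkS
  have hlt : u j < u k := lt_of_le_of_ne (hkS ▸ hm j (Finset.mem_univ j)) (hkS ▸ hjS)
  have hpos : 0 < P j k := lt_of_le_of_ne (hess j k hjk) (Ne.symm hPjk)
  nlinarith

theorem finrank_ker_mulVecLin_eq_one [NeZero n] (hirr : MatIrred P) (hess : EssNonneg P)
    (hcol : ZeroColSums P) : Module.finrank ℝ (LinearMap.ker P.mulVecLin) = 1 := by
  have hkerT : LinearMap.ker Pᵀ.mulVecLin = ℝ ∙ (1 : Fin n → ℝ) := by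
    ext u
    simp only [LinearMap.mem_ker, Matrix.mulVecLin_apply, Matrix.mulVec_transpose,
      Submodule.mem_span_singleton]
    constructor
    · intro hu
      exact ⟨u 0, funext fun i => by simp [hirr.eq_of_vecMul_eq_zero hess hcol hu i 0]⟩
    · rintro ⟨t, rfl⟩
      ext k
      simp [Matrix.vecMul, dotProduct, ← mul_sum, hcol k]
  have hT := LinearMap.finrank_range_add_finrank_ker Pᵀ.mulVecLin
  have hP := LinearMap.finrank_range_add_finrank_ker P.mulVecLin
  rw [hkerT, finrank_span_singleton one_ne_zero] at hT
  have hrank : Pᵀ.rank = P.rank := P.rank_transpose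
  simp only [Matrix.rank, Module.finrank_fin_fun] at hT hP hrank
  omega

theorem eq_zero_of_mulVec_eq_zero_s5 (hirr : MatIrred P) (hess : EssNonneg P)
    (hcol : ZeroColSums P) {ξ : Fin n → ℝ} (hξ : P *ᵥ ξ = 0) (hξsum : ∑ j, ξ j ≠ 0)
    {v : Fin n → ℝ} (hv : P *ᵥ v = 0) (hvsum : ∑ j, v j = 0) : v = 0 := by
  have : NeZero n := ⟨by rintro rfl; simp at hξsum⟩
  have hξ0 : (⟨ξ, hξ⟩ : LinearMap.ker P.mulVecLin) ≠ 0 := by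
    intro h
    have : ξ = 0 := congrArg Subtype.val h
    simp [this] at hξsum
  obtain ⟨t, ht⟩ := (finrank_eq_one_iff_of_nonzero' _ hξ0).1
    (hirr.finrank_ker_mulVecLin_eq_one hess hcol) ⟨v, hv⟩
  have hv' : v = t • ξ := (congrArg Subtype.val ht).symm
  have ht0 : t = 0 := by
    simpa [hv', ← mul_sum, hξsum] using hvsum
  rw [hv', ht0, zero_smul]

theorem eq_zero_of_map_ofReal_mulVec_eq_zero (hirr : MatIrred P) (hess : EssNonneg P)
    (hcol : ZeroColSums P) {ξ : Fin n → ℝ} (hξ : P *ᵥ ξ = 0) (hξsum : ∑ j, ξ j ≠ 0)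
    {w : Fin n → ℂ} (hw : P.map (↑) *ᵥ w = 0) (hwsum : ∑ j, w j = 0) : w = 0 := by
  have hre : (fun j => (w j).re) = 0 := by
    refine hirr.eq_zero_of_mulVec_eq_zero_s5 hess hcol hξ hξsum ?_ ?_
    · ext j
      simpa [Matrix.mulVec, dotProduct, Complex.re_sum] using congrArg Complex.re (congrFun hw j)
    · simpa [Complex.re_sum] using congrArg Complex.re hwsum
  have him : (fun j => (w j).im) = 0 := by
    refine hirr.eq_zero_of_mulVec_eq_zero_s5 hess hcol hξ hξsum ?_ ?_
    · ext j
      simpa [Matrix.mulVec, dotProduct, Complex.im_sum] using congrArg Complex.im (congrFun hw j)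
    · simpa [Complex.im_sum] using congrArg Complex.im hwsum
  ext j : 1
  exact Complex.ext (congrFun hre j) (congrFun him j)

end MatIrred

/-- The real and imaginary parts of `h₁ = 0`, `h₃ = 0` and `h₅ = 0` once `w = z = 0`,
with `A₁ = ∑ M₁ⱼξⱼ`, `A₃ = ∑ M₃ⱼξⱼ`, `K = ∑ M₂ⱼηⱼ`, `X = ‖ξ‖²`, `Y = ‖η‖²`. -/
def ReducedSystem (A₁ A₃ K X Y δ s1 s2 ν : ℝ) : Prop :=
  A₁ * δ + K * s1 = 0 ∧ K * s2 - ν * δ = 0 ∧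
  A₃ * δ - K * s1 + ν * s2 = 0 ∧ -(K * s2) - ν * s1 = 0 ∧
  δ ^ 2 * X + (s1 ^ 2 + s2 ^ 2) * Y = X + Y

section ZeroPerturbation

variable {n : ℕ} {b ξ η : Fin n → ℝ} {β : ℝ} {x y : Fin n → ℝ} {δ s1 s2 ν : ℝ}

theorem sum_HB1_zero_zero :
    ∑ j, HB1 b ξ η β x y δ s1 s2 0 0 j =
      (((∑ j, (2 * x j * y j - β * b j - 1) * ξ j) * δ : ℝ) : ℂ)
        + ((∑ j, x j ^ 2 * η j : ℝ) : ℂ) * (s1 + s2 * Complex.I) := by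
  push_cast [HB1, Pi.zero_apply, add_zero, sum_mul, ← sum_add_distrib]
  exact sum_congr rfl fun j _ => by ring

theorem sum_HB3_zero_zero :
    ∑ j, HB3 b ξ η β x y δ s1 s2 0 0 j =
      (((∑ j, (β * b j - 2 * x j * y j) * ξ j) * δ : ℝ) : ℂ)
        - ((∑ j, x j ^ 2 * η j : ℝ) : ℂ) * (s1 + s2 * Complex.I) := by
  push_cast [HB3, Pi.zero_apply, add_zero, sum_mul, ← sum_sub_distrib]
  exact sum_congr rfl fun j _ => by ring

theorem hh1_zero_zero_eq_zero_iff :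
    Hh1 b ξ η β x y δ s1 s2 0 0 ν = 0 ↔
      (∑ j, (2 * x j * y j - β * b j - 1) * ξ j) * δ + (∑ j, x j ^ 2 * η j) * s1 = 0 ∧
      (∑ j, x j ^ 2 * η j) * s2 - ν * δ = 0 := by
  simp [Hh1, sum_HB1_zero_zero, Complex.ext_iff, -Complex.ofReal_sum]

theorem hh3_zero_zero_eq_zero_iff :
    Hh3 b ξ η β x y δ s1 s2 0 0 ν = 0 ↔
      (∑ j, (β * b j - 2 * x j * y j) * ξ j) * δ - (∑ j, x j ^ 2 * η j) * s1 + ν * s2 = 0 ∧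
      -((∑ j, x j ^ 2 * η j) * s2) - ν * s1 = 0 := by
  simp [Hh3, sum_HB3_zero_zero, Complex.ext_iff, -Complex.ofReal_sum]

theorem sum_normSq_zero_zero :
    (∑ j, Complex.normSq (((δ * ξ j : ℝ) : ℂ) + (0 : Fin n → ℂ) j))
      + (∑ j, Complex.normSq (((s1 : ℂ) + (s2 : ℂ) * Complex.I) * ((η j : ℝ) : ℂ)
        + (0 : Fin n → ℂ) j))
      = δ ^ 2 * ∑ j, ξ j ^ 2 + (s1 ^ 2 + s2 ^ 2) * ∑ j, η j ^ 2 := by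
  simp only [Pi.zero_apply, add_zero, Complex.normSq_mul, Complex.normSq_ofReal,
    Complex.normSq_add_mul_I, mul_sum]
  congr 1 <;> exact sum_congr rfl fun j _ => by ring

variable {P Q : Matrix (Fin n) (Fin n) ℝ} {θ : ℝ} {w z : Fin n → ℂ}

theorem sum_eq_zero_and_hZero_zero_iff
    (hP : ∀ w : Fin n → ℂ, P.map (↑) *ᵥ w = 0 → ∑ j, w j = 0 → w = 0)
    (hQ : ∀ z : Fin n → ℂ, Q.map (↑) *ᵥ z = 0 → ∑ j, z j = 0 → z = 0) (hθ : θ ≠ 0) :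
    ((∑ j, w j = 0) ∧ (∑ j, z j = 0) ∧ HZero P Q b ξ η θ β 0 x y δ s1 s2 w z ν) ↔
      w = 0 ∧ z = 0 ∧
        ReducedSystem (∑ j, (2 * x j * y j - β * b j - 1) * ξ j)
          (∑ j, (β * b j - 2 * x j * y j) * ξ j) (∑ j, x j ^ 2 * η j)
          (∑ j, ξ j ^ 2) (∑ j, η j ^ 2) δ s1 s2 ν := by
  constructor
  · rintro ⟨hw, hz, h1, h2, h3, h4, h5⟩
    obtain rfl : w = 0 :=
      hP w (funext fun j => by simpa [Matrix.mulVec, dotProduct] using h2 j) hw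
    obtain rfl : z = 0 :=
      hQ z (funext fun j => by simpa [Matrix.mulVec, dotProduct, hθ] using h4 j) hz
    obtain ⟨e1, e2⟩ := hh1_zero_zero_eq_zero_iff.1 h1
    obtain ⟨e3, e4⟩ := hh3_zero_zero_eq_zero_iff.1 h3
    rw [sum_normSq_zero_zero] at h5
    exact ⟨rfl, rfl, e1, e2, e3, e4, by linarith⟩
  · rintro ⟨rfl, rfl, e1, e2, e3, e4, e5⟩
    refine ⟨by simp, by simp, hh1_zero_zero_eq_zero_iff.2 ⟨e1, e2⟩, fun j => by simp,
      hh3_zero_zero_eq_zero_iff.2 ⟨e3, e4⟩, fun j => by simp, ?_⟩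
    rw [sum_normSq_zero_zero]
    linarith

end ZeroPerturbation

theorem coeffs_of_base_equilibrium {n : ℕ} {b ξ η x y : Fin n → ℝ} {β c : ℝ} (hc : c ≠ 0)
    (hS : ∑ j, ξ j ^ 2 * η j ≠ 0) (hξsum : ∑ j, ξ j = 1) (hx : x = fun j => c * ξ j)
    (hy : y = fun j => β * (∑ i, b i * ξ i) / (c * ∑ i, ξ i ^ 2 * η i) * η j) :
    ∑ j, (2 * x j * y j - β * b j - 1) * ξ j = β * ∑ j, b j * ξ j - 1 ∧
      ∑ j, (β * b j - 2 * x j * y j) * ξ j = -(β * ∑ j, b j * ξ j) ∧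
      ∑ j, x j ^ 2 * η j = c ^ 2 * ∑ j, ξ j ^ 2 * η j := by
  have hK : ∑ j, x j ^ 2 * η j = c ^ 2 * ∑ j, ξ j ^ 2 * η j := by
    simp only [hx, mul_sum]
    exact sum_congr rfl fun j _ => by ring
  have hxy : ∑ j, x j * y j * ξ j = β * ∑ j, b j * ξ j := by
    calc ∑ j, x j * y j * ξ j
        = c * (β * (∑ i, b i * ξ i) / (c * ∑ i, ξ i ^ 2 * η i)) * ∑ j, ξ j ^ 2 * η j := by
          simp only [hx, hy, mul_sum]
          exact sum_congr rfl fun j _ => by ring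
      _ = β * ∑ j, b j * ξ j := by field_simp
  refine ⟨?_, ?_, hK⟩
  · rw [show ∑ j, (2 * x j * y j - β * b j - 1) * ξ j
        = 2 * ∑ j, x j * y j * ξ j - β * ∑ j, b j * ξ j - ∑ j, ξ j by
      simp only [mul_sum, ← sum_sub_distrib]
      exact sum_congr rfl fun j _ => by ring]
    rw [hxy, hξsum]
    ring
  · rw [show ∑ j, (β * b j - 2 * x j * y j) * ξ j
        = β * ∑ j, b j * ξ j - 2 * ∑ j, x j * y j * ξ j by
      simp only [mul_sum, ← sum_sub_distrib]
      exact sum_congr rfl fun j _ => by ring]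
    rw [hxy]
    ring

theorem reducedSystem_iff {B X Y ν₀ β₀ δ₀ β δ s1 s2 ν : ℝ} (hν₀ : 0 < ν₀) (hB : 0 < B)
    (hX : 0 < X) (hY : 0 < Y) (hβ₀ : β₀ = (ν₀ ^ 2 + 1) / B)
    (hδ₀ : δ₀ = Real.sqrt ((X + Y) / (X + (1 + 1 / ν₀ ^ 2) * Y))) :
    (0 ≤ δ ∧ 0 ≤ ν ∧ ReducedSystem (β * B - 1) (-(β * B)) (ν₀ ^ 2) X Y δ s1 s2 ν) ↔
      δ = δ₀ ∧ s1 = -δ₀ ∧ s2 = δ₀ / ν₀ ∧ ν = ν₀ ∧ β = β₀ := by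
  have hD : 0 < X + (1 + 1 / ν₀ ^ 2) * Y := by positivity
  have hβ₀B : β₀ * B = ν₀ ^ 2 + 1 := by rw [hβ₀]; field_simp
  have hnorm : ∀ δ, (δ ^ 2 * X + ((-δ) ^ 2 + (δ / ν₀) ^ 2) * Y = X + Y ↔
      δ ^ 2 = (X + Y) / (X + (1 + 1 / ν₀ ^ 2) * Y)) := fun δ => by
    rw [eq_div_iff hD.ne']
    constructor <;> intro h <;> field_simp at h ⊢ <;> linarith
  constructor
  · rintro ⟨hδ, hν, e1, e2, e3, e4, e5⟩
    have hδν : δ = ν * s2 := by linarith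
    have hs2 : s2 ≠ 0 := by
      rintro rfl
      obtain rfl : δ = 0 := by simpa using hδν
      obtain rfl : s1 = 0 := by simpa [hν₀.ne'] using e1
      linarith
    obtain rfl : ν = ν₀ := by
      refine (pow_left_inj₀ hν hν₀.le two_ne_zero).1 (mul_right_cancel₀ hs2 ?_)
      linear_combination -(ν * hδν) - e2
    have hs1 : s1 = -δ := mul_left_cancel₀ hν₀.ne' (by linear_combination ν * hδν - e4)
    have hs2' : s2 = δ / ν := by rw [hδν]; field_simp
    have hδ0 : δ ≠ 0 := by rw [hδν]; exact mul_ne_zero hν₀.ne' hs2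
    subst hs1 hs2'
    have hδ : δ = δ₀ := by rw [hδ₀, ← (hnorm δ).1 e5, Real.sqrt_sq hδ]
    refine ⟨hδ, by rw [hδ], by rw [hδ], rfl, ?_⟩
    rw [hβ₀, eq_div_iff hB.ne']
    exact (mul_left_inj' hδ0).1 (by linear_combination e1)
  · rintro ⟨rfl, rfl, rfl, rfl, rfl⟩
    refine ⟨hδ₀ ▸ Real.sqrt_nonneg _, hν₀.le, ?_, ?_, ?_, ?_, (hnorm δ).2 ?_⟩
    · linear_combination δ * hβ₀B
    · field_simp; ring
    · linear_combination -δ * hβ₀B + mul_div_cancel₀ δ hν₀.ne'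
    · field_simp; ring
    · rw [hδ₀, Real.sq_sqrt (by positivity)]

theorem stmt_5_general (n : ℕ)
    (P Q : Matrix (Fin n) (Fin n) ℝ) (a b ξ η : Fin n → ℝ) (θ : ℝ)
    (ha : ∀ j, 0 < a j) (hb : ∀ j, 0 < b j) (hθ : 0 < θ)
    (hPirr : MatIrred P) (hQirr : MatIrred Q)
    (hPess : EssNonneg P) (hQess : EssNonneg Q)
    (hPcol : ZeroColSums P) (hQcol : ZeroColSums Q)
    (hξpos : PosVec ξ) (hηpos : PosVec η)
    (hPξ : P.mulVec ξ = 0) (hQη : Q.mulVec η = 0)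
    (hξsum : ∑ j, ξ j = 1) (hηsum : ∑ j, η j = 1)
    (ε : ℝ)
    -- the globally defined equilibrium family on `[0, δε] × B`
    (xy : ℝ → ℝ → (Fin n → ℝ) × (Fin n → ℝ))
    (hxy0 : ∀ β ∈ Set.Icc ε (1 / ε),
      xy 0 β = ((fun j => (∑ i, a i) * ξ j),
        (fun j => β * (∑ i, b i * ξ i) /
          ((∑ i, a i) * (∑ i, (ξ i) ^ 2 * η i)) * η j)))
    -- the constants `ν₀`, `β₀`, `δ₀`
    (ν₀ β₀ δ₀ : ℝ)
    (hν₀ : ν₀ = (∑ j, a j) * Real.sqrt (∑ j, (ξ j) ^ 2 * η j))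
    (hβ₀ : β₀ = (ν₀ ^ 2 + 1) / (∑ j, b j * ξ j))
    (hδ₀ : δ₀ = Real.sqrt ((∑ j, (ξ j) ^ 2 + ∑ j, (η j) ^ 2) /
      (∑ j, (ξ j) ^ 2 + (1 + 1 / ν₀ ^ 2) * ∑ j, (η j) ^ 2)))
    -- `ε` is small enough that `β₀ ∈ (ε, 1/ε)`
    (hβ₀mem : β₀ ∈ Set.Ioo ε (1 / ε)) :
    ∀ (δ s1 s2 : ℝ) (w z : Fin n → ℂ) (ν β : ℝ),
      (0 ≤ δ ∧ 0 ≤ ν ∧ β ∈ Set.Icc ε (1 / ε) ∧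
        (∑ j, w j = 0) ∧ (∑ j, z j = 0) ∧
        HZero P Q b ξ η θ β 0 (xy 0 β).1 (xy 0 β).2 δ s1 s2 w z ν) ↔
      (δ = δ₀ ∧ s1 = -δ₀ ∧ s2 = δ₀ / ν₀ ∧ w = 0 ∧ z = 0 ∧ ν = ν₀ ∧ β = β₀) := by
  have hξne : ∑ j, ξ j ≠ 0 := by rw [hξsum]; exact one_ne_zero
  have hηne : ∑ j, η j ≠ 0 := by rw [hηsum]; exact one_ne_zero
  have hne := Finset.nonempty_of_sum_ne_zero hξne
  have hc : 0 < ∑ j, a j := sum_pos (fun j _ => ha j) hne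
  have hB : 0 < ∑ j, b j * ξ j := sum_pos (fun j _ => mul_pos (hb j) (hξpos j)) hne
  have hS : 0 < ∑ j, ξ j ^ 2 * η j :=
    sum_pos (fun j _ => mul_pos (pow_pos (hξpos j) 2) (hηpos j)) hne
  have hX : 0 < ∑ j, ξ j ^ 2 := sum_pos (fun j _ => pow_pos (hξpos j) 2) hne
  have hY : 0 < ∑ j, η j ^ 2 := sum_pos (fun j _ => pow_pos (hηpos j) 2) hne
  have hν₀pos : 0 < ν₀ := hν₀ ▸ mul_pos hc (Real.sqrt_pos.2 hS)
  have hν₀sq : ν₀ ^ 2 = (∑ j, a j) ^ 2 * ∑ j, ξ j ^ 2 * η j := by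
    rw [hν₀, mul_pow, Real.sq_sqrt hS.le]
  have reduce : ∀ β ∈ Set.Icc ε (1 / ε), ∀ δ s1 s2 w z ν,
      ((∑ j, w j = 0) ∧ (∑ j, z j = 0) ∧
        HZero P Q b ξ η θ β 0 (xy 0 β).1 (xy 0 β).2 δ s1 s2 w z ν) ↔
      w = 0 ∧ z = 0 ∧ ReducedSystem (β * ∑ j, b j * ξ j - 1) (-(β * ∑ j, b j * ξ j)) (ν₀ ^ 2)
        (∑ j, ξ j ^ 2) (∑ j, η j ^ 2) δ s1 s2 ν := by
    intro β hβ δ s1 s2 w z ν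
    obtain ⟨hA₁, hA₃, hK⟩ := coeffs_of_base_equilibrium hc.ne' hS.ne' hξsum
      (congrArg Prod.fst (hxy0 β hβ)) (congrArg Prod.snd (hxy0 β hβ))
    rw [sum_eq_zero_and_hZero_zero_iff
      (fun w => hPirr.eq_zero_of_map_ofReal_mulVec_eq_zero hPess hPcol hPξ hξne)
      (fun z => hQirr.eq_zero_of_map_ofReal_mulVec_eq_zero hQess hQcol hQη hηne) hθ.ne',
      hA₁, hA₃, hK, hν₀sq]
  intro δ s1 s2 w z ν β
  constructor
  · rintro ⟨hδ, hν, hβ, hsys⟩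
    obtain ⟨rfl, rfl, hred⟩ := (reduce β hβ δ s1 s2 w z ν).1 hsys
    obtain ⟨h₁, h₂, h₃, h₄, h₅⟩ := (reducedSystem_iff hν₀pos hB hX hY hβ₀ hδ₀).1 ⟨hδ, hν, hred⟩
    exact ⟨h₁, h₂, h₃, rfl, rfl, h₄, h₅⟩
  · rintro ⟨hδ, hs1, hs2, rfl, rfl, hν, rfl⟩
    have hβ := Set.Ioo_subset_Icc_self hβ₀mem
    obtain ⟨h₁, h₂, hred⟩ := (reducedSystem_iff hν₀pos hB hX hY hβ₀ hδ₀).2 ⟨hδ, hs1, hs2, hν, rfl⟩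
    exact ⟨h₁, h₂, hβ, (reduce β hβ δ s1 s2 0 0 ν).2 ⟨rfl, rfl, hred⟩⟩

/-- At `λ = 0` the system `H = 0`, under the constraints `δ ≥ 0`, `ν ≥ 0`,
`β ∈ B`, `w, z ∈ M_ℂ`, has exactly one solution
`(δ₀, -δ₀, δ₀/ν₀, 0, 0, ν₀, β₀)`. -/
theorem stmt_5 (n : ℕ) (hn : 2 ≤ n)
    (P Q : Matrix (Fin n) (Fin n) ℝ) (a b ξ η : Fin n → ℝ) (θ : ℝ)
    (ha : ∀ j, 0 < a j) (hb : ∀ j, 0 < b j) (hθ : 0 < θ)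
    (hPirr : MatIrred P) (hQirr : MatIrred Q)
    (hPess : EssNonneg P) (hQess : EssNonneg Q)
    (hPcol : ZeroColSums P) (hQcol : ZeroColSums Q)
    (hξpos : PosVec ξ) (hηpos : PosVec η)
    (hPξ : P.mulVec ξ = 0) (hQη : Q.mulVec η = 0)
    (hξsum : ∑ j, ξ j = 1) (hηsum : ∑ j, η j = 1)
    (ε : ℝ) (hε : ε ∈ Set.Ioo (0 : ℝ) 1)
    -- the globally defined equilibrium family on `[0, δε] × B`
    (δε : ℝ) (hδε : 0 < δε)
    (xy : ℝ → ℝ → (Fin n → ℝ) × (Fin n → ℝ))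
    (hxyC1 : ContDiffOn ℝ 1 (fun p : ℝ × ℝ => xy p.1 p.2)
      (Set.Icc 0 δε ×ˢ Set.Icc ε (1 / ε)))
    (hxy : ∀ lam ∈ Set.Ioc 0 δε, ∀ β ∈ Set.Icc ε (1 / ε),
      PosVec (xy lam β).1 ∧ PosVec (xy lam β).2 ∧
      IsEquilib P Q a b θ lam β (xy lam β).1 (xy lam β).2 ∧
      (∀ x y : Fin n → ℝ, PosVec x → PosVec y →
        IsEquilib P Q a b θ lam β x y → (x, y) = xy lam β))
    (hxy0 : ∀ β ∈ Set.Icc ε (1 / ε),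
      xy 0 β = ((fun j => (∑ i, a i) * ξ j),
        (fun j => β * (∑ i, b i * ξ i) /
          ((∑ i, a i) * (∑ i, (ξ i) ^ 2 * η i)) * η j)))
    -- the constants `ν₀`, `β₀`, `δ₀`
    (ν₀ β₀ δ₀ : ℝ)
    (hν₀ : ν₀ = (∑ j, a j) * Real.sqrt (∑ j, (ξ j) ^ 2 * η j))
    (hβ₀ : β₀ = (ν₀ ^ 2 + 1) / (∑ j, b j * ξ j))
    (hδ₀ : δ₀ = Real.sqrt ((∑ j, (ξ j) ^ 2 + ∑ j, (η j) ^ 2) /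
      (∑ j, (ξ j) ^ 2 + (1 + 1 / ν₀ ^ 2) * ∑ j, (η j) ^ 2)))
    -- `ε` is small enough that `β₀ ∈ (ε, 1/ε)`
    (hβ₀mem : β₀ ∈ Set.Ioo ε (1 / ε)) :
    ∀ (δ s1 s2 : ℝ) (w z : Fin n → ℂ) (ν β : ℝ),
      (0 ≤ δ ∧ 0 ≤ ν ∧ β ∈ Set.Icc ε (1 / ε) ∧
        (∑ j, w j = 0) ∧ (∑ j, z j = 0) ∧
        HZero P Q b ξ η θ β 0 (xy 0 β).1 (xy 0 β).2 δ s1 s2 w z ν) ↔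
      (δ = δ₀ ∧ s1 = -δ₀ ∧ s2 = δ₀ / ν₀ ∧ w = 0 ∧ z = 0 ∧ ν = ν₀ ∧ β = β₀) :=
  stmt_5_general n P Q a b ξ η θ ha hb hθ hPirr hQirr hPess hQess hPcol hQcol hξpos hηpos hPξ hQη
    hξsum hηsum ε xy hxy0 ν₀ β₀ δ₀ hν₀ hβ₀ hδ₀ hβ₀mem
end

section
/- For each λ ∈ (0, λ₂], a tuple (φ, ψ, ν, β) with ν ≥ 0, β ∈ B and nonzero (φ, ψ) ∈ ℂ^{2n} satisfies (A_β(λ) − iλν I)(φ, ψ)ᵀ = 0 if and only if ν = ν_λ, β = β_λ, and there is a nonzero constant κ ∈ ℂ with φ = κ(δ_λξ + w_λ) and ψ = κ((s_{1λ} + is_{2λ})η + z_λ). -/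
open Finset Set

/-!
An eigenvector `(φ, ψ)` of `A_β(λ)` for `iλν` can be multiplied by a nonzero complex number so
that `∑ φⱼ` becomes real and nonnegative and `‖φ‖² + ‖ψ‖² = ‖ξ‖² + ‖η‖²`; splitting it as
`φ = δξ + w`, `ψ = (s₁ + is₂)η + z` with `w, z ∈ M_ℂ` then solves `H = 0`, so by uniqueness it is
the Hopf family. Conversely, summing the rows of the eigen-equation kills the `P`- and `Q`-terms
(zero column sums), which is exactly `h₁ = h₃ = 0`; hence solutions of `H = 0` are normalized
eigenvectors, and they are nonzero by the normalization.
-/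

theorem Sum.elim_mul_left {α β M : Type*} [Mul M] (c : M) (f : α → M) (g : β → M) :
    Sum.elim (fun i => c * f i) (fun i => c * g i) = c • Sum.elim f g := by
  funext i
  cases i <;> rfl

theorem exists_scalar_real_nonneg_mul_normSq_sum_eq {ι : Type*} [Fintype ι] {v : ι → ℂ}
    (hv : v ≠ 0) (σ : ℂ) {N : ℝ} (hN : 0 < N) :
    ∃ c : ℂ, c ≠ 0 ∧ ∃ r : ℝ, 0 ≤ r ∧ c * σ = r ∧ ∑ i, Complex.normSq (c * v i) = N := by
  obtain ⟨i, hi⟩ := Function.ne_iff.mp hv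
  have hS : 0 < ∑ i, Complex.normSq (v i) :=
    Finset.sum_pos' (fun _ _ => Complex.normSq_nonneg _)
      ⟨i, Finset.mem_univ i, Complex.normSq_pos.mpr hi⟩
  set t := Real.sqrt (N / ∑ i, Complex.normSq (v i))
  have ht : 0 < t := Real.sqrt_pos.mpr (div_pos hN hS)
  have hu : Complex.normSq (Complex.exp ((-σ.arg : ℝ) * Complex.I)) = 1 := by
    rw [Complex.normSq_eq_norm_sq, Complex.norm_exp_ofReal_mul_I, one_pow]
  refine ⟨t * Complex.exp ((-σ.arg : ℝ) * Complex.I),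
    mul_ne_zero (by exact_mod_cast ht.ne') (Complex.exp_ne_zero _), t * ‖σ‖, by positivity, ?_, ?_⟩
  · have hrot : Complex.exp ((-σ.arg : ℝ) * Complex.I) * Complex.exp (σ.arg * Complex.I) = 1 := by
      rw [← Complex.exp_add, Complex.ofReal_neg, neg_mul, neg_add_cancel, Complex.exp_zero]
    rw [Complex.ofReal_mul]
    linear_combination (-(t * Complex.exp ((-σ.arg : ℝ) * Complex.I))) *
      Complex.norm_mul_exp_arg_mul_I σ + (t * ‖σ‖ : ℂ) * hrot
  · simp_rw [Complex.normSq_mul, Complex.normSq_ofReal, hu, mul_one, ← Finset.mul_sum,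
      ← sq, t, Real.sq_sqrt (div_pos hN hS).le]
    field_simp

section

variable {n : ℕ} {P Q : Matrix (Fin n) (Fin n) ℝ}

theorem sum_sq_pos_of_sum_eq_one {ι : Type*} [Fintype ι] {ξ : ι → ℝ} (hξ : ∑ i, ξ i = 1) :
    0 < ∑ i, ξ i ^ 2 := by
  obtain ⟨i, -, hi⟩ := Finset.exists_ne_zero_of_sum_ne_zero (hξ ▸ one_ne_zero)
  exact Finset.sum_pos' (fun j _ => sq_nonneg _) ⟨i, Finset.mem_univ i, sq_pos_of_ne_zero hi⟩

theorem sum_mul_ofReal_of_sum_eq_one {ξ : Fin n → ℝ} (hξ : ∑ j, ξ j = 1) (r : ℂ) :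
    ∑ j, r * (ξ j : ℂ) = r := by
  rw [← Finset.mul_sum, ← Complex.ofReal_sum, hξ, Complex.ofReal_one, mul_one]

theorem sum_ofReal_mul_eq_zero_of_mulVec_eq_zero {ξ : Fin n → ℝ} (hPξ : P.mulVec ξ = 0)
    (j : Fin n) :
    ∑ k, (P j k : ℂ) * (ξ k : ℂ) = 0 := by
  have h := congrFun hPξ j
  simp only [Matrix.mulVec, dotProduct, Pi.zero_apply] at h
  exact_mod_cast h

theorem sum_mul_ofReal_add_of_sum_eq_one {ξ : Fin n → ℝ} (hξ : ∑ j, ξ j = 1) {w : Fin n → ℂ}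
    (hw : ∑ j, w j = 0) (r : ℂ) : ∑ j, (r * (ξ j : ℂ) + w j) = r := by
  rw [Finset.sum_add_distrib, hw, add_zero, sum_mul_ofReal_of_sum_eq_one hξ]

theorem sum_mul_add_eq_of_mulVec_eq_zero {ξ : Fin n → ℝ} (hPξ : P.mulVec ξ = 0) (r : ℂ)
    (w : Fin n → ℂ) (j : Fin n) :
    ∑ k, (P j k : ℂ) * (r * (ξ k : ℂ) + w k) = ∑ k, (P j k : ℂ) * w k := by
  simp only [mul_add, Finset.sum_add_distrib, mul_left_comm _ r, ← Finset.mul_sum,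
    sum_ofReal_mul_eq_zero_of_mulVec_eq_zero hPξ, mul_zero, zero_add]

theorem ZeroColSums.mul_sum_eq (hP : ZeroColSums P) {c lam μ : ℂ} {v f u : Fin n → ℂ}
    (h : ∀ j, c * ∑ k, (P j k : ℂ) * v k + lam * f j = μ * u j) :
    lam * ∑ j, f j = μ * ∑ j, u j := by
  have hcol : ∑ j, c * ∑ k, (P j k : ℂ) * v k = 0 := by
    rw [← Finset.mul_sum, Finset.sum_comm]
    refine mul_eq_zero_of_right _ (Finset.sum_eq_zero fun k _ => ?_)
    rw [← Finset.sum_mul, ← Complex.ofReal_sum, hP k, Complex.ofReal_zero, zero_mul]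
  have hsum := Finset.sum_congr rfl fun j (_ : j ∈ Finset.univ) => h j
  rwa [Finset.sum_add_distrib, hcol, zero_add, ← Finset.mul_sum, ← Finset.mul_sum] at hsum

variable {b ξ η : Fin n → ℝ} {θ lam β : ℝ} {x y : Fin n → ℝ}

theorem mulVec_Amat_eq_smul_iff (φ ψ : Fin n → ℂ) (μ : ℂ) :
    (Amat P Q b θ lam β x y).mulVec (Sum.elim φ ψ) = μ • Sum.elim φ ψ ↔
      (∀ j, (∑ k, (P j k : ℂ) * φ k) + (lam : ℂ) *
        (((2 * x j * y j - β * b j - 1 : ℝ) : ℂ) * φ j + (((x j) ^ 2 : ℝ) : ℂ) * ψ j)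
          = μ * φ j) ∧
      (∀ j, (θ : ℂ) * (∑ k, (Q j k : ℂ) * ψ k) + (lam : ℂ) *
        (((β * b j - 2 * x j * y j : ℝ) : ℂ) * φ j - (((x j) ^ 2 : ℝ) : ℂ) * ψ j)
          = μ * ψ j) := by
  simp only [funext_iff, Sum.forall, Pi.smul_apply, smul_eq_mul, Sum.elim_inl, Sum.elim_inr,
    Amat, Matrix.add_mulVec, Matrix.smul_mulVec, Matrix.fromBlocks_mulVec, Pi.add_apply,
    Matrix.mulVec_diagonal, Matrix.zero_mulVec, Matrix.neg_mulVec, Pi.neg_apply, add_zero, zero_add]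
  simp [Matrix.mulVec, dotProduct, Matrix.map_apply, Finset.mul_sum, mul_assoc, sub_eq_add_neg]

theorem hZero_iff_mulVec_Amat_eq_smul (hP : ZeroColSums P) (hQ : ZeroColSums Q)
    (hPξ : P.mulVec ξ = 0) (hQη : Q.mulVec η = 0) (hξ : ∑ j, ξ j = 1) (hη : ∑ j, η j = 1)
    (hlam : lam ≠ 0) {δ s1 s2 ν : ℝ} {w z φ ψ : Fin n → ℂ} (hw : ∑ j, w j = 0)
    (hz : ∑ j, z j = 0) (hφ : ∀ j, φ j = ((δ * ξ j : ℝ) : ℂ) + w j)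
    (hψ : ∀ j, ψ j = ((s1 : ℂ) + (s2 : ℂ) * Complex.I) * ((η j : ℝ) : ℂ) + z j) :
    HZero P Q b ξ η θ β lam x y δ s1 s2 w z ν ↔
      (Amat P Q b θ lam β x y).mulVec (Sum.elim φ ψ)
          = (Complex.I * (lam : ℂ) * (ν : ℂ)) • Sum.elim φ ψ ∧
        (∑ j, Complex.normSq (φ j)) + (∑ j, Complex.normSq (ψ j))
          = (∑ j, (ξ j) ^ 2) + (∑ j, (η j) ^ 2) := by
  have hφ' : φ = fun j => ((δ * ξ j : ℝ) : ℂ) + w j := funext hφ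
  have hψ' : ψ = fun j => ((s1 : ℂ) + (s2 : ℂ) * Complex.I) * ((η j : ℝ) : ℂ) + z j := funext hψ
  subst hφ' hψ'
  have hlamC : (lam : ℂ) ≠ 0 := Complex.ofReal_ne_zero.mpr hlam
  rw [mulVec_Amat_eq_smul_iff]
  simp only [HZero, Hh1, Hh3, HB1, HB3, Complex.ofReal_mul,
    sum_mul_add_eq_of_mulVec_eq_zero hPξ, sum_mul_add_eq_of_mulVec_eq_zero hQη]
  constructor
  · rintro ⟨h1, h2, h3, h4, h5⟩
    simp only [h1, h3, mul_zero, sub_zero] at h2 h4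
    refine ⟨⟨fun j => by linear_combination h2 j, fun j => by linear_combination h4 j⟩, ?_⟩
    linarith
  · rintro ⟨⟨h2, h4⟩, h5⟩
    have h1 := hP.mul_sum_eq (c := 1) (lam := lam) (μ := Complex.I * lam * ν) fun j => by
      rw [one_mul]; exact h2 j
    have h3 := hQ.mul_sum_eq h4
    rw [sum_mul_ofReal_add_of_sum_eq_one hξ hw] at h1
    rw [sum_mul_ofReal_add_of_sum_eq_one hη hz] at h3
    have h1_zero := sub_eq_zero.mpr <| mul_left_cancel₀ hlamC <| h1.trans
      (by ring : Complex.I * lam * ν * δ = lam * (Complex.I * ν * δ))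
    have h3_zero := sub_eq_zero.mpr <| mul_left_cancel₀ hlamC <| h3.trans
      (by ring : Complex.I * lam * ν * ((s1 : ℂ) + s2 * Complex.I)
        = lam * (Complex.I * ν * ((s1 : ℂ) + s2 * Complex.I)))
    simp only [h1_zero, h3_zero, mul_zero, sub_zero]
    exact ⟨trivial, fun j => by linear_combination h2 j, trivial,
      fun j => by linear_combination h4 j, by linarith⟩

theorem exists_hZero_of_mulVec_Amat_eq_smul (hP : ZeroColSums P) (hQ : ZeroColSums Q)
    (hPξ : P.mulVec ξ = 0) (hQη : Q.mulVec η = 0) (hξ : ∑ j, ξ j = 1) (hη : ∑ j, η j = 1)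
    (hlam : lam ≠ 0) {ν : ℝ} {φ ψ : Fin n → ℂ} (hv : Sum.elim φ ψ ≠ 0)
    (heig : (Amat P Q b θ lam β x y).mulVec (Sum.elim φ ψ)
      = (Complex.I * (lam : ℂ) * (ν : ℂ)) • Sum.elim φ ψ) :
    ∃ c : ℂ, c ≠ 0 ∧ ∃ (δ s1 s2 : ℝ) (w z : Fin n → ℂ), 0 ≤ δ ∧ (∑ j, w j = 0) ∧
      (∑ j, z j = 0) ∧ HZero P Q b ξ η θ β lam x y δ s1 s2 w z ν ∧
      (∀ j, c * φ j = ((δ * ξ j : ℝ) : ℂ) + w j) ∧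
      (∀ j, c * ψ j = ((s1 : ℂ) + (s2 : ℂ) * Complex.I) * ((η j : ℝ) : ℂ) + z j) := by
  obtain ⟨c, hc, δ, hδ, hcσ, hnorm⟩ := exists_scalar_real_nonneg_mul_normSq_sum_eq hv
    (∑ j, φ j) (add_pos (sum_sq_pos_of_sum_eq_one hξ) (sum_sq_pos_of_sum_eq_one hη))
  rw [Fintype.sum_sum_type] at hnorm
  set s := c * ∑ j, ψ j
  have hw : ∑ j, (c * φ j - ((δ * ξ j : ℝ) : ℂ)) = 0 := by
    simp only [Finset.sum_sub_distrib, ← Finset.mul_sum, hcσ, Complex.ofReal_mul,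
      sum_mul_ofReal_of_sum_eq_one hξ, sub_self]
  have hz : ∑ j, (c * ψ j - s * ((η j : ℝ) : ℂ)) = 0 := by
    rw [Finset.sum_sub_distrib, ← Finset.mul_sum, sum_mul_ofReal_of_sum_eq_one hη, sub_self]
  have hφ (j : Fin n) : c * φ j = ((δ * ξ j : ℝ) : ℂ) + (c * φ j - ((δ * ξ j : ℝ) : ℂ)) := by
    ring
  have hψ (j : Fin n) : c * ψ j = ((s.re : ℂ) + (s.im : ℂ) * Complex.I) * ((η j : ℝ) : ℂ)
      + (c * ψ j - s * ((η j : ℝ) : ℂ)) := by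
    rw [Complex.re_add_im]; ring
  refine ⟨c, hc, δ, s.re, s.im, _, _, hδ, hw, hz, ?_, hφ, hψ⟩
  refine (hZero_iff_mulVec_Amat_eq_smul hP hQ hPξ hQη hξ hη hlam hw hz hφ hψ).mpr ⟨?_, hnorm⟩
  rw [Sum.elim_mul_left, Matrix.mulVec_smul, heig, smul_comm]

theorem mulVec_Amat_eq_smul_of_hZero (hP : ZeroColSums P) (hQ : ZeroColSums Q)
    (hPξ : P.mulVec ξ = 0) (hQη : Q.mulVec η = 0) (hξ : ∑ j, ξ j = 1) (hη : ∑ j, η j = 1)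
    (hlam : lam ≠ 0) {δ s1 s2 ν : ℝ} {w z : Fin n → ℂ} (hw : ∑ j, w j = 0)
    (hz : ∑ j, z j = 0) (h : HZero P Q b ξ η θ β lam x y δ s1 s2 w z ν) :
    let v := Sum.elim (fun j => ((δ * ξ j : ℝ) : ℂ) + w j)
      (fun j => ((s1 : ℂ) + (s2 : ℂ) * Complex.I) * ((η j : ℝ) : ℂ) + z j)
    v ≠ 0 ∧ (Amat P Q b θ lam β x y).mulVec v = (Complex.I * (lam : ℂ) * (ν : ℂ)) • v := by
  obtain ⟨heig, hnorm⟩ := (hZero_iff_mulVec_Amat_eq_smul hP hQ hPξ hQη hξ hη hlam hw hz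
    (fun _ => rfl) (fun _ => rfl)).mp h
  refine ⟨fun h0 => ?_, heig⟩
  simp only [funext_iff, Sum.forall, Sum.elim_inl, Sum.elim_inr, Pi.zero_apply] at h0
  simp only [h0.1, h0.2, map_zero, Finset.sum_const_zero, add_zero] at hnorm
  linarith [sum_sq_pos_of_sum_eq_one hξ, sum_sq_pos_of_sum_eq_one hη]

end

theorem stmt_7_general (n : ℕ)
    (P Q : Matrix (Fin n) (Fin n) ℝ) (b ξ η : Fin n → ℝ) (θ : ℝ)
    (hPcol : ZeroColSums P) (hQcol : ZeroColSums Q)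
    (hPξ : P.mulVec ξ = 0) (hQη : Q.mulVec η = 0)
    (hξsum : ∑ j, ξ j = 1) (hηsum : ∑ j, η j = 1)
    (ε : ℝ)
    (xy : ℝ → ℝ → (Fin n → ℝ) × (Fin n → ℝ))
    -- the family from the Hopf-eigenvalue theorem on `[0, λ₂]`
    (lam₂ : ℝ)
    (δf s1f s2f νf βf : ℝ → ℝ) (wf zf : ℝ → Fin n → ℂ)
    (hfam : ∀ lam ∈ Set.Icc 0 lam₂,
      (0 < δf lam ∧ 0 < νf lam ∧ βf lam ∈ Set.Icc ε (1 / ε) ∧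
        (∑ j, wf lam j = 0) ∧ (∑ j, zf lam j = 0) ∧
        HZero P Q b ξ η θ (βf lam) lam (xy lam (βf lam)).1 (xy lam (βf lam)).2
          (δf lam) (s1f lam) (s2f lam) (wf lam) (zf lam) (νf lam)) ∧
      (∀ (δ s1 s2 : ℝ) (w z : Fin n → ℂ) (ν β : ℝ),
        0 ≤ δ → 0 ≤ ν → β ∈ Set.Icc ε (1 / ε) →
        (∑ j, w j = 0) → (∑ j, z j = 0) →
        HZero P Q b ξ η θ β lam (xy lam β).1 (xy lam β).2 δ s1 s2 w z ν →
        δ = δf lam ∧ s1 = s1f lam ∧ s2 = s2f lam ∧ w = wf lam ∧ z = zf lam ∧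
          ν = νf lam ∧ β = βf lam)) :
    ∀ lam ∈ Set.Ioc 0 lam₂, ∀ (φ ψ : Fin n → ℂ) (ν β : ℝ),
      (0 ≤ ν ∧ β ∈ Set.Icc ε (1 / ε) ∧ Sum.elim φ ψ ≠ 0 ∧
        (Amat P Q b θ lam β (xy lam β).1 (xy lam β).2).mulVec (Sum.elim φ ψ)
          = (Complex.I * (lam : ℂ) * (ν : ℂ)) • Sum.elim φ ψ) ↔
      (ν = νf lam ∧ β = βf lam ∧ ∃ κ : ℂ, κ ≠ 0 ∧
        φ = (fun j => κ * (((δf lam * ξ j : ℝ) : ℂ) + wf lam j)) ∧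
        ψ = (fun j => κ * (((s1f lam : ℂ) + (s2f lam : ℂ) * Complex.I) *
          ((η j : ℝ) : ℂ) + zf lam j))) := by
  rintro lam ⟨hlam, hlam₂⟩ φ ψ ν β
  obtain ⟨⟨-, hνf, hβf, hwf, hzf, hHf⟩, huniq⟩ := hfam lam ⟨hlam.le, hlam₂⟩
  constructor
  · rintro ⟨hν, hβ, hv, heig⟩
    obtain ⟨c, hc, δ, s1, s2, w, z, hδ, hw, hz, hH, hφ, hψ⟩ :=
      exists_hZero_of_mulVec_Amat_eq_smul hPcol hQcol hPξ hQη hξsum hηsum hlam.ne' hv heig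
    obtain ⟨rfl, rfl, rfl, rfl, rfl, rfl, rfl⟩ := huniq δ s1 s2 w z ν β hδ hν hβ hw hz hH
    refine ⟨rfl, rfl, c⁻¹, inv_ne_zero hc, funext fun j => ?_, funext fun j => ?_⟩
    · rw [← hφ, inv_mul_cancel_left₀ hc]
    · rw [← hψ, inv_mul_cancel_left₀ hc]
  · rintro ⟨rfl, rfl, κ, hκ, rfl, rfl⟩
    obtain ⟨hv, heig⟩ :=
      mulVec_Amat_eq_smul_of_hZero hPcol hQcol hPξ hQη hξsum hηsum hlam.ne' hwf hzf hHf
    rw [Sum.elim_mul_left, Matrix.mulVec_smul, heig, smul_comm]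
    exact ⟨hνf.le, hβf, smul_ne_zero hκ hv, rfl⟩

/-- For `λ ∈ (0, λ₂]`, the problem `(A_β(λ) - iλν I)(φ,ψ)ᵀ = 0` with `ν ≥ 0`,
`β ∈ B` and `(φ,ψ) ≠ 0` is solvable iff `ν = ν_λ`, `β = β_λ`, and `(φ,ψ)` is a
nonzero scalar multiple of `(δ_λξ + w_λ, (s_{1λ}+is_{2λ})η + z_λ)`. -/
theorem stmt_7 (n : ℕ) (hn : 2 ≤ n)
    (P Q : Matrix (Fin n) (Fin n) ℝ) (a b ξ η : Fin n → ℝ) (θ : ℝ)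
    (ha : ∀ j, 0 < a j) (hb : ∀ j, 0 < b j) (hθ : 0 < θ)
    (hPirr : MatIrred P) (hQirr : MatIrred Q)
    (hPess : EssNonneg P) (hQess : EssNonneg Q)
    (hPcol : ZeroColSums P) (hQcol : ZeroColSums Q)
    (hξpos : PosVec ξ) (hηpos : PosVec η)
    (hPξ : P.mulVec ξ = 0) (hQη : Q.mulVec η = 0)
    (hξsum : ∑ j, ξ j = 1) (hηsum : ∑ j, η j = 1)
    (ε : ℝ) (hε : ε ∈ Set.Ioo (0 : ℝ) 1)
    -- the globally defined equilibrium family on `[0, δε] × B`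
    (δε : ℝ) (hδε : 0 < δε)
    (xy : ℝ → ℝ → (Fin n → ℝ) × (Fin n → ℝ))
    (hxyC1 : ContDiffOn ℝ 1 (fun p : ℝ × ℝ => xy p.1 p.2)
      (Set.Icc 0 δε ×ˢ Set.Icc ε (1 / ε)))
    (hxy : ∀ lam ∈ Set.Ioc 0 δε, ∀ β ∈ Set.Icc ε (1 / ε),
      PosVec (xy lam β).1 ∧ PosVec (xy lam β).2 ∧
      IsEquilib P Q a b θ lam β (xy lam β).1 (xy lam β).2 ∧
      (∀ x y : Fin n → ℝ, PosVec x → PosVec y →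
        IsEquilib P Q a b θ lam β x y → (x, y) = xy lam β))
    (hxy0 : ∀ β ∈ Set.Icc ε (1 / ε),
      xy 0 β = ((fun j => (∑ i, a i) * ξ j),
        (fun j => β * (∑ i, b i * ξ i) /
          ((∑ i, a i) * (∑ i, (ξ i) ^ 2 * η i)) * η j)))
    -- the family from the Hopf-eigenvalue theorem on `[0, λ₂]`
    (lam₂ : ℝ) (hlam₂ : lam₂ ∈ Set.Ioo 0 δε)
    (δf s1f s2f νf βf : ℝ → ℝ) (wf zf : ℝ → Fin n → ℂ)
    (hδfC1 : ContDiffOn ℝ 1 δf (Set.Icc 0 lam₂)) (hs1fC1 : ContDiffOn ℝ 1 s1f (Set.Icc 0 lam₂))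
    (hs2fC1 : ContDiffOn ℝ 1 s2f (Set.Icc 0 lam₂)) (hνfC1 : ContDiffOn ℝ 1 νf (Set.Icc 0 lam₂))
    (hβfC1 : ContDiffOn ℝ 1 βf (Set.Icc 0 lam₂)) (hwfC1 : ContDiffOn ℝ 1 wf (Set.Icc 0 lam₂))
    (hzfC1 : ContDiffOn ℝ 1 zf (Set.Icc 0 lam₂))
    (hfam : ∀ lam ∈ Set.Icc 0 lam₂,
      (0 < δf lam ∧ 0 < νf lam ∧ βf lam ∈ Set.Icc ε (1 / ε) ∧
        (∑ j, wf lam j = 0) ∧ (∑ j, zf lam j = 0) ∧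
        HZero P Q b ξ η θ (βf lam) lam (xy lam (βf lam)).1 (xy lam (βf lam)).2
          (δf lam) (s1f lam) (s2f lam) (wf lam) (zf lam) (νf lam)) ∧
      (∀ (δ s1 s2 : ℝ) (w z : Fin n → ℂ) (ν β : ℝ),
        0 ≤ δ → 0 ≤ ν → β ∈ Set.Icc ε (1 / ε) →
        (∑ j, w j = 0) → (∑ j, z j = 0) →
        HZero P Q b ξ η θ β lam (xy lam β).1 (xy lam β).2 δ s1 s2 w z ν →
        δ = δf lam ∧ s1 = s1f lam ∧ s2 = s2f lam ∧ w = wf lam ∧ z = zf lam ∧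
          ν = νf lam ∧ β = βf lam)) :
    ∀ lam ∈ Set.Ioc 0 lam₂, ∀ (φ ψ : Fin n → ℂ) (ν β : ℝ),
      (0 ≤ ν ∧ β ∈ Set.Icc ε (1 / ε) ∧ Sum.elim φ ψ ≠ 0 ∧
        (Amat P Q b θ lam β (xy lam β).1 (xy lam β).2).mulVec (Sum.elim φ ψ)
          = (Complex.I * (lam : ℂ) * (ν : ℂ)) • Sum.elim φ ψ) ↔
      (ν = νf lam ∧ β = βf lam ∧ ∃ κ : ℂ, κ ≠ 0 ∧
        φ = (fun j => κ * (((δf lam * ξ j : ℝ) : ℂ) + wf lam j)) ∧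
        ψ = (fun j => κ * (((s1f lam : ℂ) + (s2f lam : ℂ) * Complex.I) *
          ((η j : ℝ) : ℂ) + zf lam j))) :=
  stmt_7_general n P Q b ξ η θ hPcol hQcol hPξ hQη hξsum hηsum ε xy lam₂ δf s1f s2f νf βf wf zf hfam
end

section
/- For each λ ∈ (0, λ₂], the number −iλν_λ is an eigenvalue of the transpose matrix A_{β_λ}(λ)ᵀ and its eigenspace N[A_{β_λ}(λ)ᵀ + iλν_λ I] is one-dimensional, spanned by a vector (φ̃_λ, ψ̃_λ) ∈ ℂ^{2n} of the form φ̃_λ = δ̃_λ(1,…,1)ᵀ + w̃_λ with δ̃_λ ≥ 0 and ∑_{j=1}^n ξ_j w̃_{λj} = 0, ψ̃_λ = (s̃_{1λ} + is̃_{2λ})(1,…,1)ᵀ + z̃_λ with s̃_{1λ}, s̃_{2λ} ∈ ℝ and ∑_{j=1}^n η_j z̃_{λj} = 0, normalized by ‖φ̃_λ‖₂² + ‖ψ̃_λ‖₂² = 2n. Moreover, as λ → 0 these quantities converge to δ̃₀ = √((2ν₀² + 2)/(2ν₀² + 1)), s̃_{10} = δ̃₀ν₀²/(ν₀² + 1),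 s̃_{20} = δ̃₀ν₀/(ν₀² + 1), w̃₀ = 0 and z̃₀ = 0. -/
open Finset Set

/-!
`A_β(λ)` has real entries, so conjugating eigenvectors turns the one-dimensional eigenspace of
`iλν_λ` into a one-dimensional eigenspace of `-iλν_λ`; as `A - μ` and its transpose have the same
rank, the same holds for `Aᵀ`. A scalar multiple fixes the norm and makes `∑ ξⱼ φ̃ⱼ` real and
nonnegative.

The normalized eigenvectors lie in a compact ball, so it suffices to identify every cluster point
`u` as `λ → 0⁺`. Although `ν_λ` is not known to stay bounded, the eigenvalues `-iλν_λ` converge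
along the cluster filter to a purely imaginary `μ` with `diag(Pᵀ, θQᵀ) u = μ u`; Gershgorin's
theorem for the essentially nonnegative, zero-column-sum matrices forces `μ = 0`, and
irreducibility makes `u` constant on each block: `u = (α𝟙, γ𝟙)`. Pairing the eigen-equation with
the null vectors `(ξ, 0)` and `(0, η)` of `diag(P, θQ)` removes the diffusion part, and in the
limit leaves `(B - 1) α - B γ = -iVα`, `ν₀² (α - γ) = -iVγ` with `V ≥ 0`. Together with
`α ≥ 0` and `|α|² + |γ|² = 2` this forces `V = ν₀`, `α = δ̃₀` and `γ = s̃₁₀ + i s̃₂₀`.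
-/

open Matrix Filter Topology ComplexConjugate

section Eigenspace

variable {K ι : Type*} [Field K] [Fintype ι]

def SpansEigenspace (A : Matrix ι ι K) (μ : K) (v : ι → K) : Prop :=
  v ≠ 0 ∧ A *ᵥ v = μ • v ∧ ∀ u, A *ᵥ u = μ • u → ∃ κ : K, u = κ • v

lemma SpansEigenspace.smul {A : Matrix ι ι K} {μ κ : K} {v : ι → K}
    (h : SpansEigenspace A μ v) (hκ : κ ≠ 0) : SpansEigenspace A μ (κ • v) := by
  obtain ⟨hv, hAv, hspan⟩ := h
  refine ⟨smul_ne_zero hκ hv, by rw [mulVec_smul, hAv, smul_comm], fun u hu => ?_⟩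
  obtain ⟨c, rfl⟩ := hspan u hu
  exact ⟨c * κ⁻¹, by rw [smul_smul, mul_assoc, inv_mul_cancel₀ hκ, mul_one]⟩

lemma mulVec_eq_smul_iff_mem_ker [DecidableEq ι] {A : Matrix ι ι K} {μ : K} {u : ι → K} :
    A *ᵥ u = μ • u ↔ u ∈ LinearMap.ker (A - μ • 1).mulVecLin := by
  rw [LinearMap.mem_ker, mulVecLin_apply, sub_mulVec, smul_mulVec, one_mulVec, sub_eq_zero]

lemma exists_spansEigenspace_iff [DecidableEq ι] {A : Matrix ι ι K} {μ : K} :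
    (∃ v, SpansEigenspace A μ v) ↔
      Module.finrank K (LinearMap.ker (A - μ • 1).mulVecLin) = 1 := by
  simp_rw [finrank_eq_one_iff', SpansEigenspace, mulVec_eq_smul_iff_mem_ker]
  constructor
  · rintro ⟨v, hv, hmem, hspan⟩
    refine ⟨⟨v, hmem⟩, by simpa using hv, fun ⟨u, hu⟩ => ?_⟩
    obtain ⟨κ, rfl⟩ := hspan u hu
    exact ⟨κ, rfl⟩
  · rintro ⟨⟨v, hmem⟩, hv, hspan⟩
    refine ⟨v, by simpa using hv, hmem, fun u hu => ?_⟩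
    obtain ⟨κ, hκ⟩ := hspan ⟨u, hu⟩
    exact ⟨κ, by simpa using hκ.symm⟩

lemma finrank_ker_mulVecLin_transpose (C : Matrix ι ι K) :
    Module.finrank K (LinearMap.ker Cᵀ.mulVecLin) =
      Module.finrank K (LinearMap.ker C.mulVecLin) := by
  have h := LinearMap.finrank_range_add_finrank_ker C.mulVecLin
  have hT := LinearMap.finrank_range_add_finrank_ker Cᵀ.mulVecLin
  rw [← rank, ← rank_transpose] at h
  rw [← rank] at hT
  omega

lemma SpansEigenspace.exists_transpose [DecidableEq ι] {A : Matrix ι ι K} {μ : K} {v : ι → K}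
    (h : SpansEigenspace A μ v) : ∃ u, SpansEigenspace Aᵀ μ u := by
  have hT : Aᵀ - μ • 1 = (A - μ • 1)ᵀ := by rw [transpose_sub, transpose_smul, transpose_one]
  rw [exists_spansEigenspace_iff, ← exists_spansEigenspace_iff.1 ⟨v, h⟩, hT,
    finrank_ker_mulVecLin_transpose]

lemma SpansEigenspace.star_of_map_conj {A : Matrix ι ι ℂ} (hA : A.map conj = A) {μ : ℂ} {v : ι → ℂ}
    (h : SpansEigenspace A μ v) : SpansEigenspace A (conj μ) (star v) := by
  have hconj : ∀ w : ι → ℂ, A *ᵥ star w = star (A *ᵥ w) := fun w => by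
    ext i
    rw [Pi.star_apply, Complex.star_def, RingHom.map_mulVec, hA]
    rfl
  obtain ⟨hv, hAv, hspan⟩ := h
  refine ⟨by simpa using hv, by rw [hconj, hAv, star_smul]; rfl, fun u hu => ?_⟩
  obtain ⟨κ, hκ⟩ := hspan (star u) (by
    rw [hconj, hu, star_smul]; simp)
  exact ⟨conj κ, by rw [← star_star u, hκ, star_smul]; rfl⟩

end Eigenspace

lemma mul_dotProduct_mulVec_eq {R ι : Type*} [CommRing R] [Fintype ι] {K N : Matrix ι ι R}
    {w u : ι → R} {c μ : R} (hw : K *ᵥ w = 0) (h : (K + c • N)ᵀ *ᵥ u = μ • u) :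
    c * ((N *ᵥ w) ⬝ᵥ u) = μ * (w ⬝ᵥ u) := by
  have h' := congrArg (w ⬝ᵥ ·) h
  simp only [dotProduct_mulVec, vecMul_transpose, add_mulVec, hw, smul_mulVec, zero_add,
    smul_dotProduct, dotProduct_smul, smul_eq_mul] at h'
  exact h'

section Normalize

variable {ι : Type*} [Fintype ι]

open ComplexOrder in
lemma exists_smul_normSq_sum_eq {u : ι → ℂ} (hu : u ≠ 0) {R : ℝ} (hR : 0 < R) (c : ℂ) :
    ∃ κ : ℂ, κ ≠ 0 ∧ ∑ i, Complex.normSq (κ * u i) = R ∧ 0 ≤ κ * c := by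
  set N := ∑ i, Complex.normSq (u i)
  obtain ⟨i, hi⟩ := Function.ne_iff.1 hu
  have hN : 0 < N := lt_of_lt_of_le (Complex.normSq_pos.2 hi)
    (Finset.single_le_sum (fun j _ => Complex.normSq_nonneg (u j)) (Finset.mem_univ i))
  set t := Real.sqrt (R / N)
  have ht : 0 < t := Real.sqrt_pos.2 (div_pos hR hN)
  have hunit : ‖Complex.exp (↑(-c.arg) * Complex.I)‖ = 1 := Complex.norm_exp_ofReal_mul_I _
  refine ⟨t * Complex.exp (↑(-c.arg) * Complex.I), mul_ne_zero (by exact_mod_cast ht.ne')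
    (Complex.exp_ne_zero _), ?_, ?_⟩
  · simp only [Complex.normSq_mul, Complex.normSq_ofReal, ← Finset.mul_sum]
    rw [Complex.normSq_eq_norm_sq (Complex.exp _), hunit, Real.mul_self_sqrt (div_pos hR hN).le,
      one_pow, mul_one, div_mul_cancel₀ R hN.ne']
  · nth_rw 2 [← Complex.norm_mul_exp_arg_mul_I c]
    rw [mul_mul_mul_comm, ← Complex.exp_add, Complex.ofReal_neg, neg_mul, neg_add_cancel,
      Complex.exp_zero, mul_one]
    exact_mod_cast mul_nonneg ht.le (norm_nonneg c)

lemma norm_le_sqrt_of_sum_normSq_eq {u : ι → ℂ} {R : ℝ}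
    (h : ∑ i, Complex.normSq (u i) = R) : ‖u‖ ≤ Real.sqrt R := by
  refine (pi_norm_le_iff_of_nonneg (Real.sqrt_nonneg _)).2 fun i => ?_
  rw [← Real.sqrt_sq (norm_nonneg _), ← Complex.normSq_eq_norm_sq]
  exact Real.sqrt_le_sqrt
    (h ▸ Finset.single_le_sum (fun j _ => Complex.normSq_nonneg (u j)) (Finset.mem_univ i))

open ComplexOrder in
lemma SpansEigenspace.exists_normalized_transpose [DecidableEq ι] {A : Matrix ι ι ℂ}
    (hA : A.map conj = A) {μ : ℂ} {v : ι → ℂ} (h : SpansEigenspace A μ v) {R : ℝ} (hR : 0 < R)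
    (w : ι → ℂ) :
    ∃ u, SpansEigenspace Aᵀ (conj μ) u ∧ ∑ i, Complex.normSq (u i) = R ∧ 0 ≤ w ⬝ᵥ u := by
  obtain ⟨u, hu⟩ := (h.star_of_map_conj hA).exists_transpose
  obtain ⟨κ, hκ, hnorm, hpos⟩ := exists_smul_normSq_sum_eq hu.1 hR (w ⬝ᵥ u)
  exact ⟨κ • u, hu.smul hκ, hnorm, by rwa [dotProduct_smul, smul_eq_mul]⟩

end Normalize

section TendstoMatrix

variable {X R m : Type*} [Fintype m] [TopologicalSpace R] [NonUnitalNonAssocSemiring R]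
  [IsTopologicalSemiring R] {F : Filter X}

lemma Filter.Tendsto.mulVec {M : X → Matrix m m R} {u : X → m → R} {M₀ : Matrix m m R}
    {u₀ : m → R} (hM : Tendsto M F (𝓝 M₀)) (hu : Tendsto u F (𝓝 u₀)) :
    Tendsto (fun x => M x *ᵥ u x) F (𝓝 (M₀ *ᵥ u₀)) :=
  ((continuous_fst.matrix_mulVec continuous_snd).tendsto (M₀, u₀)).comp (hM.prodMk_nhds hu)

lemma Filter.Tendsto.dotProduct {v u : X → m → R} {v₀ u₀ : m → R}
    (hv : Tendsto v F (𝓝 v₀)) (hu : Tendsto u F (𝓝 u₀)) :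
    Tendsto (fun x => v x ⬝ᵥ u x) F (𝓝 (v₀ ⬝ᵥ u₀)) :=
  ((continuous_fst.dotProduct continuous_snd).tendsto (v₀, u₀)).comp (hv.prodMk_nhds hu)

end TendstoMatrix

section Limits

variable {X ι : Type*} {F : Filter X} [F.NeBot]

lemma exists_tendsto_of_eventually_eq_smul {𝕜 : Type*} [NormedField 𝕜] {a b : X → ι → 𝕜}
    {c : X → 𝕜} {a₀ b₀ : ι → 𝕜} (ha : Tendsto a F (𝓝 a₀)) (hb : Tendsto b F (𝓝 b₀))
    (hb₀ : b₀ ≠ 0) (h : ∀ᶠ x in F, a x = c x • b x) :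
    ∃ c₀, Tendsto c F (𝓝 c₀) ∧ a₀ = c₀ • b₀ := by
  obtain ⟨i, hi⟩ := Function.ne_iff.1 hb₀
  have hbi := tendsto_pi_nhds.1 hb i
  have hc : Tendsto c F (𝓝 (a₀ i / b₀ i)) := by
    refine ((tendsto_pi_nhds.1 ha i).div hbi hi).congr' ?_
    filter_upwards [h, hbi.eventually_ne hi] with x hx hx0
    rw [Pi.div_apply, hx, Pi.smul_apply, smul_eq_mul, mul_div_cancel_right₀ _ hx0]
  exact ⟨_, hc, tendsto_nhds_unique (ha.congr' h) (hc.smul hb)⟩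

lemma exists_nonneg_of_eventually_eq_neg_I_mul_smul {a b : X → ι → ℂ} {ν : X → ℝ}
    {a₀ b₀ : ι → ℂ} (ha : Tendsto a F (𝓝 a₀)) (hb : Tendsto b F (𝓝 b₀)) (hb₀ : b₀ ≠ 0)
    (h : ∀ᶠ x in F, 0 < ν x ∧ a x = (-(Complex.I * ν x)) • b x) :
    ∃ V : ℝ, 0 ≤ V ∧ a₀ = (-(Complex.I * V)) • b₀ := by
  obtain ⟨c₀, hc, hc₀⟩ := exists_tendsto_of_eventually_eq_smul ha hb hb₀ (h.mono fun _ => And.right)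
  have hclosed : IsClosed {z : ℂ | z.re = 0 ∧ z.im ≤ 0} :=
    (isClosed_eq Complex.continuous_re continuous_const).inter
      (isClosed_le Complex.continuous_im continuous_const)
  obtain ⟨hre, him⟩ := hclosed.mem_of_tendsto hc (h.mono fun x hx => by simp [hx.1.le])
  exact ⟨-c₀.im, by linarith, by rw [hc₀]; congr 1; apply Complex.ext <;> simp [hre]⟩

end Limits

section Laplacian

variable {n : ℕ} {P : Matrix (Fin n) (Fin n) ℝ}

lemma ZeroColSums.diag_eq (hcol : ZeroColSums P) (k : Fin n) :
    P k k = -∑ j ∈ Finset.univ.erase k, P j k := by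
  linarith [Finset.add_sum_erase _ (fun j => P j k) (Finset.mem_univ k), hcol k]

lemma MatIrred.eq_of_transpose_mulVec_eq_zero (hirr : MatIrred P) (hess : EssNonneg P)
    (hcol : ZeroColSums P) {w : Fin n → ℝ} (hw : Pᵀ *ᵥ w = 0) (j k : Fin n) : w j = w k := by
  have : Nonempty (Fin n) := ⟨j⟩
  obtain ⟨j₀, -, hmax⟩ := Finset.exists_max_image Finset.univ w Finset.univ_nonempty
  set S := Finset.univ.filter fun j => w j = w j₀
  suffices hS : S = Finset.univ by
    have hmem : ∀ j, w j = w j₀ := fun j => by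
      have h : j ∈ S := hS ▸ Finset.mem_univ j
      simpa [S] using h
    rw [hmem j, hmem k]
  by_contra hS
  obtain ⟨j₁, hj₁, k₁, hk₁, hP⟩ := hirr S ⟨j₀, by simp [S]⟩ hS
  simp only [S, Finset.mem_filter, Finset.mem_univ, true_and] at hj₁ hk₁
  -- at a maximum of `w`, every term of `∑ᵢ Pᵢₖ (wᵢ - w_max) = 0` is nonpositive
  have hsum : ∑ i, P i k₁ * (w i - w j₀) = 0 := by
    simp only [mul_sub, Finset.sum_sub_distrib, ← Finset.sum_mul, hcol k₁, zero_mul, sub_zero]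
    simpa [mulVec, dotProduct] using congrFun hw k₁
  have hnonpos : ∀ i ∈ Finset.univ, P i k₁ * (w i - w j₀) ≤ 0 := fun i _ => by
    rcases eq_or_ne i k₁ with rfl | hik
    · simp [hk₁]
    · exact mul_nonpos_of_nonneg_of_nonpos (hess i k₁ hik)
        (sub_nonpos.2 (hmax i (Finset.mem_univ i)))
  have h := (Finset.sum_eq_zero_iff_of_nonpos hnonpos).1 hsum j₁ (Finset.mem_univ j₁)
  exact hj₁ (sub_eq_zero.1 ((mul_eq_zero.1 h).resolve_left hP))

lemma MatIrred.exists_eq_const_of_transpose_mulVec_eq_zero (hirr : MatIrred P)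
    (hess : EssNonneg P) (hcol : ZeroColSums P) {w : Fin n → ℂ}
    (hw : (P.map ((↑) : ℝ → ℂ))ᵀ *ᵥ w = 0) : ∃ c, w = fun _ => c := by
  rcases isEmpty_or_nonempty (Fin n) with _ | ⟨⟨j₀⟩⟩
  · exact ⟨0, Subsingleton.elim _ _⟩
  have hpart : ∀ f : ℂ →+ ℝ, (∀ (r : ℝ) z, f (r * z) = r * f z) →
      ∀ j k, f (w j) = f (w k) := fun f hf =>
    hirr.eq_of_transpose_mulVec_eq_zero hess hcol <| funext fun k => by
      simpa [mulVec, dotProduct, map_sum, hf] using congrArg f (congrFun hw k)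
  refine ⟨w j₀, funext fun j => Complex.ext ?_ ?_⟩
  · exact hpart Complex.reAddGroupHom (fun r z => Complex.re_ofReal_mul r z) j j₀
  · exact hpart Complex.imAddGroupHom (fun r z => Complex.im_ofReal_mul r z) j j₀

lemma EssNonneg.eq_zero_or_eq_zero_of_transpose_mulVec_eq_smul (hess : EssNonneg P)
    (hcol : ZeroColSums P) {μ : ℂ} (hμ : μ.re = 0) {w : Fin n → ℂ}
    (hw : (P.map ((↑) : ℝ → ℂ))ᵀ *ᵥ w = μ • w) : μ = 0 ∨ w = 0 := by
  rcases isEmpty_or_nonempty (Fin n) with _ | _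
  · exact Or.inr (Subsingleton.elim _ _)
  obtain ⟨k, -, hmax⟩ := Finset.exists_max_image Finset.univ (fun j => ‖w j‖)
    Finset.univ_nonempty
  rcases eq_or_ne (w k) 0 with hk | hk
  · exact Or.inr <| funext fun j => norm_le_zero_iff.1 (by simpa [hk] using hmax j (by simp))
  left
  -- Gershgorin's disc of column `k`: `‖μ - Pₖₖ‖ ≤ -Pₖₖ`
  have hrow : (μ - P k k) * w k = ∑ j ∈ Finset.univ.erase k, (P j k : ℂ) * w j := by
    have h := congrFun hw k
    simp only [mulVec, dotProduct, transpose_apply, map_apply, Pi.smul_apply,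
      smul_eq_mul] at h
    rw [← Finset.add_sum_erase _ _ (Finset.mem_univ k)] at h
    linear_combination -h
  have hdisc : ‖μ - P k k‖ * ‖w k‖ ≤ -P k k * ‖w k‖ := by
    rw [← norm_mul, hrow, hcol.diag_eq k, neg_neg, Finset.sum_mul]
    refine (norm_sum_le _ _).trans (Finset.sum_le_sum fun j hj => ?_)
    have hPjk := hess j k (Finset.ne_of_mem_erase hj)
    rw [norm_mul, Complex.norm_real, Real.norm_of_nonneg hPjk]
    exact mul_le_mul_of_nonneg_left (hmax j (Finset.mem_univ j)) hPjk
  have hle := le_of_mul_le_mul_right hdisc (norm_pos_iff.2 hk)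
  have hsq : ‖μ - P k k‖ ^ 2 = P k k ^ 2 + μ.im ^ 2 := by
    rw [← Complex.normSq_eq_norm_sq, Complex.normSq_apply]
    simp only [Complex.sub_re, Complex.sub_im, Complex.ofReal_re, Complex.ofReal_im, hμ, sub_zero]
    ring
  have him : μ.im = 0 := by nlinarith [norm_nonneg (μ - P k k)]
  exact Complex.ext hμ him

end Laplacian

section Model

variable {n : ℕ}

def diffusionMat (P Q : Matrix (Fin n) (Fin n) ℝ) (θ : ℝ) :
    Matrix (Fin n ⊕ Fin n) (Fin n ⊕ Fin n) ℂ :=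
  fromBlocks (P.map fun t => (t : ℂ)) 0 0 ((θ : ℂ) • Q.map fun t => (t : ℂ))

noncomputable def reactionMat (b : Fin n → ℝ) (β : ℝ) (x y : Fin n → ℝ) :
    Matrix (Fin n ⊕ Fin n) (Fin n ⊕ Fin n) ℂ :=
  fromBlocks
    (diagonal fun j => ((2 * x j * y j - β * b j - 1 : ℝ) : ℂ))
    (diagonal fun j => (((x j) ^ 2 : ℝ) : ℂ))
    (diagonal fun j => ((β * b j - 2 * x j * y j : ℝ) : ℂ))
    (-(diagonal fun j => (((x j) ^ 2 : ℝ) : ℂ)))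

lemma Amat_eq_diffusionMat_add (P Q : Matrix (Fin n) (Fin n) ℝ) (b : Fin n → ℝ) (θ lam β : ℝ)
    (x y : Fin n → ℝ) :
    Amat P Q b θ lam β x y = diffusionMat P Q θ + (lam : ℂ) • reactionMat b β x y := rfl

lemma Amat_map_conj (P Q : Matrix (Fin n) (Fin n) ℝ) (b : Fin n → ℝ) (θ lam β : ℝ)
    (x y : Fin n → ℝ) : (Amat P Q b θ lam β x y).map conj = Amat P Q b θ lam β x y := by
  ext (i | i) (j | j) <;> by_cases hij : i = j <;>
    simp [Amat, hij, map_ofNat]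

lemma continuous_reactionMat (b : Fin n → ℝ) :
    Continuous fun p : ℝ × (Fin n → ℝ) × (Fin n → ℝ) => reactionMat b p.1 p.2.1 p.2.2 := by
  unfold reactionMat
  fun_prop

variable {P Q : Matrix (Fin n) (Fin n) ℝ}

lemma map_ofReal_mulVec_eq_zero {ξ : Fin n → ℝ} (hPξ : P *ᵥ ξ = 0) :
    P.map (fun t => (t : ℂ)) *ᵥ (fun j => (ξ j : ℂ)) = 0 := by
  ext i
  change (P.map Complex.ofRealHom *ᵥ (Complex.ofRealHom ∘ ξ)) i = 0
  rw [← RingHom.map_mulVec, hPξ, Pi.zero_apply, map_zero]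

lemma diffusionMat_mulVec_inl_eq_zero {ξ : Fin n → ℝ} (hPξ : P *ᵥ ξ = 0) (θ : ℝ) :
    diffusionMat P Q θ *ᵥ Sum.elim (fun j => (ξ j : ℂ)) 0 = 0 := by
  simp [diffusionMat, fromBlocks_mulVec, map_ofReal_mulVec_eq_zero hPξ]

lemma diffusionMat_mulVec_inr_eq_zero {η : Fin n → ℝ} (hQη : Q *ᵥ η = 0) (θ : ℝ) :
    diffusionMat P Q θ *ᵥ Sum.elim 0 (fun j => (η j : ℂ)) = 0 := by
  simp [diffusionMat, fromBlocks_mulVec, smul_mulVec, map_ofReal_mulVec_eq_zero hQη]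

lemma reactionMat_dotProduct_eq_of_transpose_eigen {b : Fin n → ℝ} {θ lam β ν : ℝ}
    {x y : Fin n → ℝ} {w u : Fin n ⊕ Fin n → ℂ} (hlam : lam ≠ 0)
    (hw : diffusionMat P Q θ *ᵥ w = 0)
    (hu : (Amat P Q b θ lam β x y)ᵀ *ᵥ u = (-(Complex.I * lam * ν)) • u) :
    (reactionMat b β x y *ᵥ w) ⬝ᵥ u = -(Complex.I * ν) * (w ⬝ᵥ u) := by
  rw [Amat_eq_diffusionMat_add] at hu
  refine mul_left_cancel₀ (Complex.ofReal_ne_zero.2 hlam) ?_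
  rw [mul_dotProduct_mulVec_eq hw hu]
  ring

lemma exists_eq_sumElim_const_of_diffusionMat_transpose (hPirr : MatIrred P)
    (hQirr : MatIrred Q) (hPess : EssNonneg P) (hQess : EssNonneg Q) (hPcol : ZeroColSums P)
    (hQcol : ZeroColSums Q) {θ : ℝ} (hθ : θ ≠ 0) {μ : ℂ} (hμ : μ.re = 0)
    {u : Fin n ⊕ Fin n → ℂ} (hu0 : u ≠ 0) (hu : (diffusionMat P Q θ)ᵀ *ᵥ u = μ • u) :
    ∃ α γ : ℂ, u = Sum.elim (fun _ => α) (fun _ => γ) := by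
  have hθ' : (θ : ℂ) ≠ 0 := Complex.ofReal_ne_zero.2 hθ
  rw [diffusionMat, fromBlocks_transpose, fromBlocks_mulVec] at hu
  have hφ : (P.map fun t => (t : ℂ))ᵀ *ᵥ (u ∘ Sum.inl) = μ • (u ∘ Sum.inl) := by
    simpa [Pi.smul_comp] using congrArg (· ∘ Sum.inl) hu
  have hψ : (Q.map fun t => (t : ℂ))ᵀ *ᵥ (u ∘ Sum.inr) = (μ / θ) • (u ∘ Sum.inr) := by
    have h := congrArg (· ∘ Sum.inr) hu
    simp only [Sum.elim_comp_inr, transpose_zero, zero_mulVec, zero_add, transpose_smul,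
      smul_mulVec, Pi.smul_comp] at h
    rw [div_eq_inv_mul, mul_smul, ← h, smul_smul, inv_mul_cancel₀ hθ', one_smul]
  have hμ0 : μ = 0 := by
    by_contra hμ0
    have hφ0 := (hPess.eq_zero_or_eq_zero_of_transpose_mulVec_eq_smul hPcol hμ hφ).resolve_left hμ0
    have hψ0 := (hQess.eq_zero_or_eq_zero_of_transpose_mulVec_eq_smul hQcol
      (by simp [Complex.div_ofReal_re, hμ]) hψ).resolve_left (div_ne_zero hμ0 hθ')
    exact hu0 (by rw [← Sum.elim_comp_inl_inr u, hφ0, hψ0, Sum.elim_zero_zero])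
  rw [hμ0, zero_smul] at hφ
  rw [hμ0, zero_div, zero_smul] at hψ
  obtain ⟨α, hα⟩ := hPirr.exists_eq_const_of_transpose_mulVec_eq_zero hPess hPcol hφ
  obtain ⟨γ, hγ⟩ := hQirr.exists_eq_const_of_transpose_mulVec_eq_zero hQess hQcol hψ
  exact ⟨α, γ, by rw [← Sum.elim_comp_inl_inr u, hα, hγ]⟩

-- `M₁ⱼ + M₃ⱼ = -1`, so the `ξ`-pairing depends on `β, x, y` only through one real number `B`
lemma reactionMat_mulVec_inl_dotProduct {ξ : Fin n → ℝ} (hξsum : ∑ j, ξ j = 1)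
    (b : Fin n → ℝ) (β : ℝ) (x y : Fin n → ℝ) (α γ : ℂ) : ∃ B : ℝ,
    (reactionMat b β x y *ᵥ Sum.elim (fun j => (ξ j : ℂ)) 0) ⬝ᵥ
      Sum.elim (fun _ => α) (fun _ => γ) = ((B - 1 : ℝ) : ℂ) * α - (B : ℂ) * γ := by
  refine ⟨∑ j, ξ j * (2 * x j * y j - β * b j), ?_⟩
  have hξ : ∑ j, (ξ j : ℂ) = 1 := by exact_mod_cast hξsum
  simp only [reactionMat, fromBlocks_mulVec, dotProduct, Fintype.sum_sum_type]
  simp only [Function.comp_def, Sum.elim_inl, Sum.elim_inr, mulVec_diagonal,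
    mulVec_zero, add_zero, ← Finset.sum_mul]
  push_cast
  have h₁ : ∑ j, (2 * (x j : ℂ) * y j - β * b j - 1) * ξ j
      = ∑ j, (ξ j : ℂ) * (2 * x j * y j - β * b j) - ∑ j, (ξ j : ℂ) := by
    rw [← Finset.sum_sub_distrib]
    exact Finset.sum_congr rfl fun j _ => by ring
  have h₃ : ∑ j, ((β : ℂ) * b j - 2 * x j * y j) * ξ j
      = -∑ j, (ξ j : ℂ) * (2 * x j * y j - β * b j) := by
    rw [← Finset.sum_neg_distrib]
    exact Finset.sum_congr rfl fun j _ => by ring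
  rw [h₁, h₃, hξ]
  ring

lemma reactionMat_mulVec_inr_dotProduct (η : Fin n → ℝ)
    (b : Fin n → ℝ) (β : ℝ) (x y : Fin n → ℝ) (α γ : ℂ) :
    (reactionMat b β x y *ᵥ Sum.elim 0 (fun j => (η j : ℂ))) ⬝ᵥ
      Sum.elim (fun _ => α) (fun _ => γ) = ((∑ j, η j * x j ^ 2 : ℝ) : ℂ) * (α - γ) := by
  simp only [reactionMat, fromBlocks_mulVec, dotProduct, Fintype.sum_sum_type]
  simp [mulVec_diagonal, ← Finset.sum_mul, Function.comp_def, mul_comm (η _ : ℂ)]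
  ring

end Model

noncomputable def adjointAmplitude (ν₀ : ℝ) : ℝ :=
  Real.sqrt ((2 * ν₀ ^ 2 + 2) / (2 * ν₀ ^ 2 + 1))

lemma eq_adjointAmplitude_of_reduced_eigen {ν₀ V B α : ℝ} {γ : ℂ} (hν₀ : 0 < ν₀) (hV : 0 ≤ V)
    (hα : 0 ≤ α) (h₁ : ((B - 1 : ℝ) : ℂ) * α - B * γ = -(Complex.I * V) * α)
    (h₂ : ((ν₀ ^ 2 : ℝ) : ℂ) * (α - γ) = -(Complex.I * V) * γ)
    (hnorm : α ^ 2 + Complex.normSq γ = 2) :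
    α = adjointAmplitude ν₀ ∧
      γ = ((adjointAmplitude ν₀ * ν₀ ^ 2 / (ν₀ ^ 2 + 1) : ℝ) : ℂ)
        + ((adjointAmplitude ν₀ * ν₀ / (ν₀ ^ 2 + 1) : ℝ) : ℂ) * Complex.I := by
  obtain ⟨g₁, g₂, rfl⟩ : ∃ g₁ g₂ : ℝ, γ = g₁ + g₂ * Complex.I :=
    ⟨γ.re, γ.im, (Complex.re_add_im γ).symm⟩
  rw [Complex.normSq_add_mul_I] at hnorm
  have r₁ : (B - 1) * α - B * g₁ = 0 := by simpa using congrArg Complex.re h₁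
  have i₁ : B * g₂ = V * α := by simpa using congrArg Complex.im h₁
  have r₂ : ν₀ ^ 2 * (α - g₁) = V * g₂ := by
    simpa [-Complex.ofReal_pow] using congrArg Complex.re h₂
  have i₂ : ν₀ ^ 2 * g₂ = V * g₁ := by simpa [-Complex.ofReal_pow] using congrArg Complex.im h₂
  have hαpos : 0 < α := by
    refine hα.lt_of_ne fun hα0 => ?_
    subst hα0
    have : ν₀ ^ 2 * 2 = 0 := by linear_combination (-g₁) * r₂ + g₂ * i₂ - ν₀ ^ 2 * hnorm
    nlinarith [pow_pos hν₀ 2]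
  have hVν : V = ν₀ := by
    have key : (V ^ 2 - ν₀ ^ 2) * α = 0 := by linear_combination ν₀ ^ 2 * r₁ - B * r₂ - V * i₁
    have := (mul_eq_zero.1 key).resolve_right hαpos.ne'
    nlinarith
  subst V
  have hg₁ : g₁ = ν₀ * g₂ := mul_left_cancel₀ hν₀.ne' (by linear_combination -i₂)
  have hg₂ : g₂ * (ν₀ ^ 2 + 1) = ν₀ * α :=
    mul_left_cancel₀ hν₀.ne' (by linear_combination -r₂ - ν₀ ^ 2 * hg₁)
  have hα2 : α ^ 2 = (2 * ν₀ ^ 2 + 2) / (2 * ν₀ ^ 2 + 1) := by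
    rw [eq_div_iff (by positivity)]
    linear_combination (ν₀ ^ 2 + 1) * hnorm - (ν₀ ^ 2 + 1) * (g₁ + ν₀ * g₂) * hg₁
      - (g₂ * (ν₀ ^ 2 + 1) + ν₀ * α) * hg₂
  have hαd : α = adjointAmplitude ν₀ := by rw [adjointAmplitude, ← hα2, Real.sqrt_sq hα]
  rw [← hαd]
  have e₂ : g₂ = α * ν₀ / (ν₀ ^ 2 + 1) := by
    rw [eq_div_iff (by positivity)]
    linarith
  have e₁ : g₁ = α * ν₀ ^ 2 / (ν₀ ^ 2 + 1) := by rw [hg₁, e₂]; ring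
  exact ⟨rfl, by rw [e₁, e₂]⟩

noncomputable def adjointLimit (n : ℕ) (ν₀ : ℝ) : Fin n ⊕ Fin n → ℂ :=
  Sum.elim (fun _ => (adjointAmplitude ν₀ : ℂ))
    (fun _ => ((adjointAmplitude ν₀ * ν₀ ^ 2 / (ν₀ ^ 2 + 1) : ℝ) : ℂ)
      + ((adjointAmplitude ν₀ * ν₀ / (ν₀ ^ 2 + 1) : ℝ) : ℂ) * Complex.I)

section Convergence

variable {n : ℕ} {P Q : Matrix (Fin n) (Fin n) ℝ} {b ξ η : Fin n → ℝ} {θ : ℝ}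
  {F : Filter ℝ} [F.NeBot] {ν : ℝ → ℝ} {u : ℝ → Fin n ⊕ Fin n → ℂ} {u₀ : Fin n ⊕ Fin n → ℂ}

lemma exists_eq_sumElim_const_of_tendsto (hPirr : MatIrred P) (hQirr : MatIrred Q)
    (hPess : EssNonneg P) (hQess : EssNonneg Q) (hPcol : ZeroColSums P) (hQcol : ZeroColSums Q)
    (hθ : θ ≠ 0) (hF : F ≤ 𝓝 0) {N : ℝ → Matrix (Fin n ⊕ Fin n) (Fin n ⊕ Fin n) ℂ}
    {N₀ : Matrix (Fin n ⊕ Fin n) (Fin n ⊕ Fin n) ℂ} (hN : Tendsto N F (𝓝 N₀))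
    (hu : Tendsto u F (𝓝 u₀)) (hu₀ : u₀ ≠ 0)
    (heig : ∀ᶠ l : ℝ in F, 0 < l ∧ 0 < ν l ∧
      (diffusionMat P Q θ + (l : ℂ) • N l)ᵀ *ᵥ u l = (-(Complex.I * l * ν l)) • u l) :
    ∃ α γ : ℂ, u₀ = Sum.elim (fun _ => α) (fun _ => γ) := by
  have hlam : Tendsto (fun l : ℝ => (l : ℂ)) F (𝓝 0) :=
    (Complex.continuous_ofReal.tendsto' 0 0 Complex.ofReal_zero).comp (tendsto_id.mono_left hF)
  have hM : Tendsto (fun l : ℝ => (diffusionMat P Q θ + (l : ℂ) • N l)ᵀ) F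
      (𝓝 (diffusionMat P Q θ)ᵀ) := by
    have h := (tendsto_const_nhds (x := diffusionMat P Q θ)).add (hlam.smul hN)
    rw [zero_smul, add_zero] at h
    exact (continuous_id.matrix_transpose.tendsto _).comp h
  -- the eigenvalues `-iλν_λ` need not tend to `0`, but their limit is still purely imaginary
  obtain ⟨V, -, hKu⟩ := exists_nonneg_of_eventually_eq_neg_I_mul_smul (hM.mulVec hu) hu hu₀
    (heig.mono fun l h => ⟨mul_pos h.1 h.2.1, by rw [h.2.2, Complex.ofReal_mul, mul_assoc]⟩)
  exact exists_eq_sumElim_const_of_diffusionMat_transpose hPirr hQirr hPess hQess hPcol hQcol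
    hθ (by simp) hu₀ hKu

lemma exists_reduced_eigen_of_tendsto (hPξ : P *ᵥ ξ = 0) (hQη : Q *ᵥ η = 0)
    (hξsum : ∑ j, ξ j = 1) (hηsum : ∑ j, η j = 1) {β : ℝ → ℝ} {x y : ℝ → Fin n → ℝ}
    {β₀ : ℝ} {x₀ y₀ : Fin n → ℝ}
    (hN : Tendsto (fun l => reactionMat b (β l) (x l) (y l)) F (𝓝 (reactionMat b β₀ x₀ y₀)))
    {α γ : ℂ} (hu : Tendsto u F (𝓝 (Sum.elim (fun _ => α) (fun _ => γ))))
    (hαγ : Sum.elim (fun _ => α) (fun _ => γ) ≠ (0 : Fin n ⊕ Fin n → ℂ))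
    (heig : ∀ᶠ l in F, 0 < l ∧ 0 < ν l ∧
      (Amat P Q b θ l (β l) (x l) (y l))ᵀ *ᵥ u l = (-(Complex.I * l * ν l)) • u l) :
    ∃ V B : ℝ, 0 ≤ V ∧ ((B - 1 : ℝ) : ℂ) * α - B * γ = -(Complex.I * V) * α ∧
      ((∑ j, η j * x₀ j ^ 2 : ℝ) : ℂ) * (α - γ) = -(Complex.I * V) * γ := by
  set wξ : Fin n ⊕ Fin n → ℂ := Sum.elim (fun j => (ξ j : ℂ)) 0
  set wη : Fin n ⊕ Fin n → ℂ := Sum.elim 0 (fun j => (η j : ℂ))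
  have hsolv : ∀ᶠ l in F, 0 < ν l ∧
      ![(reactionMat b (β l) (x l) (y l) *ᵥ wξ) ⬝ᵥ u l,
        (reactionMat b (β l) (x l) (y l) *ᵥ wη) ⬝ᵥ u l]
        = (-(Complex.I * ν l)) • ![wξ ⬝ᵥ u l, wη ⬝ᵥ u l] :=
    heig.mono fun l ⟨hl, hν, hAu⟩ => ⟨hν, by
      ext i
      fin_cases i
      · simpa [neg_mul] using reactionMat_dotProduct_eq_of_transpose_eigen hl.ne'
          (diffusionMat_mulVec_inl_eq_zero hPξ θ) hAu
      · simpa [neg_mul] using reactionMat_dotProduct_eq_of_transpose_eigen hl.ne'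
          (diffusionMat_mulVec_inr_eq_zero hQη θ) hAu⟩
  have hb₀ : ![wξ ⬝ᵥ Sum.elim (fun _ => α) (fun _ => γ), wη ⬝ᵥ Sum.elim (fun _ => α) (fun _ => γ)]
      = ![α, γ] := by
    have hξ : ∑ j, (ξ j : ℂ) = 1 := by exact_mod_cast hξsum
    have hη : ∑ j, (η j : ℂ) = 1 := by exact_mod_cast hηsum
    simp [wξ, wη, dotProduct, Fintype.sum_sum_type, ← Finset.sum_mul, hξ, hη]
  obtain ⟨V, hV, hab⟩ := exists_nonneg_of_eventually_eq_neg_I_mul_smul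
    (h := hsolv)
    (((hN.mulVec tendsto_const_nhds).dotProduct hu).matrixVecCons
      (((hN.mulVec tendsto_const_nhds).dotProduct hu).matrixVecCons tendsto_const_nhds))
    ((tendsto_const_nhds.dotProduct hu).matrixVecCons
      ((tendsto_const_nhds.dotProduct hu).matrixVecCons tendsto_const_nhds)) (by
      rw [hb₀]
      intro h
      have h0 : α = 0 := congrFun h 0
      have h1 : γ = 0 := congrFun h 1
      exact hαγ (funext fun i => by cases i <;> simp [h0, h1]))
  rw [hb₀] at hab
  obtain ⟨B, hB⟩ := reactionMat_mulVec_inl_dotProduct hξsum b β₀ x₀ y₀ α γ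
  refine ⟨V, B, hV, ?_, ?_⟩
  · rw [← hB]
    simpa using congrFun hab 0
  · rw [← reactionMat_mulVec_inr_dotProduct η b β₀ x₀ y₀]
    simpa using congrFun hab 1

open ComplexOrder in
lemma eq_adjointLimit_of_tendsto (hPirr : MatIrred P) (hQirr : MatIrred Q)
    (hPess : EssNonneg P) (hQess : EssNonneg Q) (hPcol : ZeroColSums P) (hQcol : ZeroColSums Q)
    (hPξ : P *ᵥ ξ = 0) (hQη : Q *ᵥ η = 0) (hξsum : ∑ j, ξ j = 1) (hηsum : ∑ j, η j = 1)
    (hθ : θ ≠ 0) (hF : F ≤ 𝓝 0) {β : ℝ → ℝ} {x y : ℝ → Fin n → ℝ}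
    {β₀ ν₀ : ℝ} {x₀ y₀ : Fin n → ℝ}
    (hxy : Tendsto (fun l => (β l, x l, y l)) F (𝓝 (β₀, x₀, y₀)))
    (hν₀ : 0 < ν₀) (hν₀x : ν₀ ^ 2 = ∑ j, η j * x₀ j ^ 2) (hu : Tendsto u F (𝓝 u₀))
    (heig : ∀ᶠ l in F, (0 < l ∧ 0 < ν l ∧
      (Amat P Q b θ l (β l) (x l) (y l))ᵀ *ᵥ u l = (-(Complex.I * l * ν l)) • u l) ∧
      ∑ i, Complex.normSq (u l i) = 2 * n ∧ 0 ≤ ∑ j, (ξ j : ℂ) * u l (Sum.inl j)) :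
    u₀ = adjointLimit n ν₀ := by
  have hn : (n : ℝ) ≠ 0 := Nat.cast_ne_zero.2 (by rintro rfl; simp at hξsum)
  have hnorm₀ : ∑ i, Complex.normSq (u₀ i) = 2 * n :=
    (isClosed_eq (f := fun v : Fin n ⊕ Fin n → ℂ => ∑ i, Complex.normSq (v i)) (by fun_prop)
      continuous_const).mem_of_tendsto hu (heig.mono fun l h => h.2.1)
  have hu₀ : u₀ ≠ 0 := by
    rintro rfl
    simp [hn] at hnorm₀
  have hN := ((continuous_reactionMat b).tendsto (β₀, x₀, y₀)).comp hxy
  obtain ⟨α, γ, rfl⟩ := exists_eq_sumElim_const_of_tendsto hPirr hQirr hPess hQess hPcol hQcol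
    hθ hF hN hu hu₀ (heig.mono fun l h => h.1)
  obtain ⟨V, B, hV, h₁, h₂⟩ := exists_reduced_eigen_of_tendsto hPξ hQη hξsum hηsum hN hu hu₀
    (heig.mono fun l h => h.1)
  have hαnn : 0 ≤ α := by
    have hξ : ∑ j, (ξ j : ℂ) = 1 := by exact_mod_cast hξsum
    have h := ge_of_tendsto (((by fun_prop : Continuous fun v : Fin n ⊕ Fin n → ℂ =>
      ∑ j, (ξ j : ℂ) * v (Sum.inl j)).tendsto _).comp hu) (heig.mono fun l h => h.2.2)
    simpa [← Finset.sum_mul, hξ] using h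
  obtain ⟨a, rfl⟩ : ∃ a : ℝ, α = a := ⟨α.re, Complex.ext rfl (Complex.nonneg_iff.1 hαnn).2.symm⟩
  have hnorm : a ^ 2 + Complex.normSq γ = 2 := by
    simp [Fintype.sum_sum_type] at hnorm₀
    refine mul_left_cancel₀ hn ?_
    linear_combination hnorm₀
  rw [← hν₀x] at h₂
  obtain ⟨rfl, rfl⟩ := eq_adjointAmplitude_of_reduced_eigen hν₀ hV
    (Complex.zero_le_real.1 hαnn) h₁ h₂ hnorm
  rfl

end Convergence

section Adjoint

variable {n : ℕ} {P Q : Matrix (Fin n) (Fin n) ℝ} {b ξ η : Fin n → ℝ} {θ : ℝ}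

open ComplexOrder in
lemma exists_normalized_adjoint_family (hn : 0 < n) {S : Set ℝ} {β ν : ℝ → ℝ}
    {x y : ℝ → Fin n → ℝ} {v : ℝ → Fin n ⊕ Fin n → ℂ}
    (heig : ∀ l ∈ S, SpansEigenspace (Amat P Q b θ l (β l) (x l) (y l))
      (Complex.I * l * ν l) (v l)) :
    ∃ u : ℝ → Fin n ⊕ Fin n → ℂ, ∀ l ∈ S,
      SpansEigenspace (Amat P Q b θ l (β l) (x l) (y l))ᵀ (-(Complex.I * l * ν l)) (u l) ∧
      ∑ i, Complex.normSq (u l i) = 2 * n ∧ 0 ≤ ∑ j, (ξ j : ℂ) * u l (Sum.inl j) := by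
  have hex : ∀ l, ∃ u : Fin n ⊕ Fin n → ℂ, l ∈ S →
      SpansEigenspace (Amat P Q b θ l (β l) (x l) (y l))ᵀ (-(Complex.I * l * ν l)) u ∧
      ∑ i, Complex.normSq (u i) = 2 * n ∧ 0 ≤ ∑ j, (ξ j : ℂ) * u (Sum.inl j) := fun l => by
    by_cases hl : l ∈ S
    · obtain ⟨u, hu, hnorm, hpos⟩ := SpansEigenspace.exists_normalized_transpose
        (Amat_map_conj ..) (heig l hl) (R := 2 * n) (mul_pos two_pos (Nat.cast_pos.2 hn))
        (Sum.elim (fun j => (ξ j : ℂ)) 0)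
      refine ⟨u, fun _ => ⟨by simpa using hu, hnorm, ?_⟩⟩
      simpa [dotProduct, Fintype.sum_sum_type] using hpos
    · exact ⟨0, fun h => absurd h hl⟩
  choose u hu using hex
  exact ⟨u, hu⟩

open ComplexOrder in
lemma tendsto_adjointLimit (hPirr : MatIrred P) (hQirr : MatIrred Q)
    (hPess : EssNonneg P) (hQess : EssNonneg Q) (hPcol : ZeroColSums P) (hQcol : ZeroColSums Q)
    (hPξ : P *ᵥ ξ = 0) (hQη : Q *ᵥ η = 0) (hξsum : ∑ j, ξ j = 1) (hηsum : ∑ j, η j = 1)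
    (hθ : θ ≠ 0) {ε δε lam₂ : ℝ} (hlam₂ : lam₂ ∈ Set.Ioo 0 δε)
    {xy : ℝ → ℝ → (Fin n → ℝ) × (Fin n → ℝ)}
    (hxy : ContinuousOn (fun p : ℝ × ℝ => xy p.1 p.2) (Set.Icc 0 δε ×ˢ Set.Icc ε (1 / ε)))
    {x₀ : Fin n → ℝ} (hx₀ : ∀ β ∈ Set.Icc ε (1 / ε), (xy 0 β).1 = x₀)
    {ν₀ : ℝ} (hν₀ : 0 < ν₀) (hν₀x : ν₀ ^ 2 = ∑ j, η j * x₀ j ^ 2)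
    {β ν : ℝ → ℝ} {u : ℝ → Fin n ⊕ Fin n → ℂ}
    (hβν : ∀ l ∈ Set.Ioc 0 lam₂, β l ∈ Set.Icc ε (1 / ε) ∧ 0 < ν l)
    (hu : ∀ l ∈ Set.Ioc 0 lam₂,
      (Amat P Q b θ l (β l) (xy l (β l)).1 (xy l (β l)).2)ᵀ *ᵥ u l
        = (-(Complex.I * l * ν l)) • u l ∧
      ∑ i, Complex.normSq (u l i) = 2 * n ∧ 0 ≤ ∑ j, (ξ j : ℂ) * u l (Sum.inl j)) :
    Tendsto u (𝓝[>] 0) (𝓝 (adjointLimit n ν₀)) := by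
  have hev : ∀ᶠ l in 𝓝[>] 0, l ∈ Set.Ioc 0 lam₂ := Ioc_mem_nhdsGT hlam₂.1
  have hK := isCompact_closedBall (0 : Fin n ⊕ Fin n → ℂ) (Real.sqrt (2 * n))
  refine hK.tendsto_nhds_of_unique_mapClusterPt (hev.mono fun l hl => by
    simpa using norm_le_sqrt_of_sum_normSq_eq (hu l hl).2.1) fun u₀ _ hclust => ?_
  obtain ⟨U, hU, hUu⟩ := mapClusterPt_iff_ultrafilter.1 hclust
  have hUev : ∀ᶠ l in (U : Filter ℝ), l ∈ Set.Ioc 0 lam₂ := hU hev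
  obtain ⟨β₀, hβ₀, hUβ⟩ := isCompact_Icc.ultrafilter_le_nhds (U.map β) (by
    rw [Ultrafilter.coe_map, le_principal_iff]
    exact hUev.mono fun l hl => (hβν l hl).1)
  have hβU : Tendsto β U (𝓝 β₀) := by rwa [Ultrafilter.coe_map] at hUβ
  have hdom : Tendsto (fun l => (l, β l)) U
      (𝓝[Set.Icc 0 δε ×ˢ Set.Icc ε (1 / ε)] (0, β₀)) :=
    tendsto_nhdsWithin_iff.2
      ⟨(tendsto_id.mono_left (hU.trans nhdsWithin_le_nhds)).prodMk_nhds hβU,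
        hUev.mono fun l hl => ⟨⟨hl.1.le, hl.2.trans hlam₂.2.le⟩, (hβν l hl).1⟩⟩
  have hxyU : Tendsto (fun l => xy l (β l)) U (𝓝 (xy 0 β₀)) :=
    (hxy (0, β₀) ⟨⟨le_rfl, (hlam₂.1.trans hlam₂.2).le⟩, hβ₀⟩).tendsto.comp hdom
  exact eq_adjointLimit_of_tendsto hPirr hQirr hPess hQess hPcol hQcol hPξ hQη hξsum hηsum hθ
    (hU.trans nhdsWithin_le_nhds) (hβU.prodMk_nhds hxyU) hν₀ (hx₀ β₀ hβ₀ ▸ hν₀x) hUu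
    (hUev.mono fun l hl => ⟨⟨hl.1, (hβν l hl).2, (hu l hl).1⟩, (hu l hl).2⟩)

open ComplexOrder in
lemma exists_decomposition_of_tendsto (hξsum : ∑ j, ξ j = 1) (hηsum : ∑ j, η j = 1)
    {F : Filter ℝ} {S : Set ℝ} {u : ℝ → Fin n ⊕ Fin n → ℂ}
    (hu : ∀ l ∈ S, 0 ≤ ∑ j, (ξ j : ℂ) * u l (Sum.inl j)) {d s₁ s₂ : ℝ}
    (hlim : Tendsto u F (𝓝 (Sum.elim (fun _ => (d : ℂ)) (fun _ => (s₁ : ℂ) + s₂ * Complex.I)))) :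
    ∃ (δt s1t s2t : ℝ → ℝ) (wt zt : ℝ → Fin n → ℂ),
      (∀ l ∈ S, 0 ≤ δt l ∧ ∑ j, (ξ j : ℂ) * wt l j = 0 ∧ ∑ j, (η j : ℂ) * zt l j = 0 ∧
        Sum.elim (fun j => ((δt l : ℝ) : ℂ) + wt l j)
          (fun j => ((s1t l : ℂ) + (s2t l : ℂ) * Complex.I) + zt l j) = u l) ∧
      Tendsto δt F (𝓝 d) ∧ Tendsto s1t F (𝓝 s₁) ∧ Tendsto s2t F (𝓝 s₂) ∧
      Tendsto wt F (𝓝 0) ∧ Tendsto zt F (𝓝 0) := by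
  have hξ : ∑ j, (ξ j : ℂ) = 1 := by exact_mod_cast hξsum
  have hη : ∑ j, (η j : ℂ) = 1 := by exact_mod_cast hηsum
  set σξ : ℝ → ℂ := fun l => ∑ j, (ξ j : ℂ) * u l (Sum.inl j)
  set ση : ℝ → ℂ := fun l => ∑ j, (η j : ℂ) * u l (Sum.inr j)
  have hG : ∀ {Y : Type} [TopologicalSpace Y] (G : (Fin n ⊕ Fin n → ℂ) → Y), Continuous G →
      ∀ y, G _ = y → Tendsto (fun l => G (u l)) F (𝓝 y) :=
    fun G hG y hy => hy ▸ (hG.tendsto _).comp hlim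
  refine ⟨fun l => (σξ l).re, fun l => (ση l).re, fun l => (ση l).im,
    fun l j => u l (Sum.inl j) - (σξ l).re, fun l j => u l (Sum.inr j) - ση l,
    fun l hl => ?_, ?_, ?_, ?_, ?_, ?_⟩
  · have hδ : ((σξ l).re : ℂ) = σξ l :=
      Complex.ext rfl (by rw [Complex.ofReal_im]; exact (Complex.nonneg_iff.1 (hu l hl)).2)
    refine ⟨(Complex.nonneg_iff.1 (hu l hl)).1, ?_, ?_, ?_⟩
    · simp only [mul_sub, Finset.sum_sub_distrib, ← Finset.sum_mul, hξ, one_mul, hδ]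
      exact sub_self _
    · simp only [mul_sub, Finset.sum_sub_distrib, ← Finset.sum_mul, hη, one_mul]
      exact sub_self _
    · simp only [add_sub_cancel, Complex.re_add_im]
      exact Sum.elim_comp_inl_inr (u l)
  · exact hG (fun v => (∑ j, (ξ j : ℂ) * v (Sum.inl j)).re) (by fun_prop) _ (by
      simp only [Sum.elim_inl, ← Finset.sum_mul, hξ, one_mul, Complex.ofReal_re])
  · exact hG (fun v => (∑ j, (η j : ℂ) * v (Sum.inr j)).re) (by fun_prop) _ (by
      simp only [Sum.elim_inr, ← Finset.sum_mul, hη, one_mul, Complex.add_re, Complex.ofReal_re,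
        Complex.re_ofReal_mul, Complex.I_re, mul_zero, add_zero])
  · exact hG (fun v => (∑ j, (η j : ℂ) * v (Sum.inr j)).im) (by fun_prop) _ (by
      simp only [Sum.elim_inr, ← Finset.sum_mul, hη, one_mul, Complex.add_im, Complex.ofReal_im,
        Complex.im_ofReal_mul, Complex.I_im, mul_one, zero_add])
  · exact hG (fun v j => v (Sum.inl j) - (∑ k, (ξ k : ℂ) * v (Sum.inl k)).re) (by fun_prop) _
      (funext fun j => by simp only [Sum.elim_inl, ← Finset.sum_mul, hξ, one_mul,
        Complex.ofReal_re, sub_self, Pi.zero_apply])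
  · exact hG (fun v j => v (Sum.inr j) - ∑ k, (η k : ℂ) * v (Sum.inr k)) (by fun_prop) _
      (funext fun j => by simp only [Sum.elim_inr, ← Finset.sum_mul, hη, one_mul, sub_self,
        Pi.zero_apply])

end Adjoint

theorem stmt_8_general (n : ℕ)
    (P Q : Matrix (Fin n) (Fin n) ℝ) (a b ξ η : Fin n → ℝ) (θ : ℝ)
    (ha : ∀ j, 0 < a j) (hθ : 0 < θ)
    (hPirr : MatIrred P) (hQirr : MatIrred Q)
    (hPess : EssNonneg P) (hQess : EssNonneg Q)
    (hPcol : ZeroColSums P) (hQcol : ZeroColSums Q)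
    (hξpos : PosVec ξ) (hηpos : PosVec η)
    (hPξ : P.mulVec ξ = 0) (hQη : Q.mulVec η = 0)
    (hξsum : ∑ j, ξ j = 1) (hηsum : ∑ j, η j = 1)
    (ε : ℝ)
    -- the globally defined equilibrium family on `[0, δε] × B`
    (δε : ℝ)
    (xy : ℝ → ℝ → (Fin n → ℝ) × (Fin n → ℝ))
    (hxyC1 : ContDiffOn ℝ 1 (fun p : ℝ × ℝ => xy p.1 p.2)
      (Set.Icc 0 δε ×ˢ Set.Icc ε (1 / ε)))
    (hxy0 : ∀ β ∈ Set.Icc ε (1 / ε),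
      xy 0 β = ((fun j => (∑ i, a i) * ξ j),
        (fun j => β * (∑ i, b i * ξ i) /
          ((∑ i, a i) * (∑ i, (ξ i) ^ 2 * η i)) * η j)))
    -- the family from the Hopf-eigenvalue theorem on `[0, λ₂]`
    (lam₂ : ℝ) (hlam₂ : lam₂ ∈ Set.Ioo 0 δε)
    (δf s1f s2f νf βf : ℝ → ℝ) (wf zf : ℝ → Fin n → ℂ)
    (hpos : ∀ lam ∈ Set.Icc 0 lam₂,
      0 < δf lam ∧ 0 < νf lam ∧ βf lam ∈ Set.Icc ε (1 / ε))
    (heig : ∀ lam ∈ Set.Ioc 0 lam₂,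
      Sum.elim (fun j => ((δf lam * ξ j : ℝ) : ℂ) + wf lam j)
          (fun j => ((s1f lam : ℂ) + (s2f lam : ℂ) * Complex.I) * ((η j : ℝ) : ℂ)
            + zf lam j) ≠ 0 ∧
      (Amat P Q b θ lam (βf lam) (xy lam (βf lam)).1 (xy lam (βf lam)).2).mulVec
          (Sum.elim (fun j => ((δf lam * ξ j : ℝ) : ℂ) + wf lam j)
            (fun j => ((s1f lam : ℂ) + (s2f lam : ℂ) * Complex.I) * ((η j : ℝ) : ℂ)
              + zf lam j))
        = (Complex.I * (lam : ℂ) * (νf lam : ℂ)) •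
            Sum.elim (fun j => ((δf lam * ξ j : ℝ) : ℂ) + wf lam j)
              (fun j => ((s1f lam : ℂ) + (s2f lam : ℂ) * Complex.I) * ((η j : ℝ) : ℂ)
                + zf lam j) ∧
      (∀ u : Fin n ⊕ Fin n → ℂ,
        (Amat P Q b θ lam (βf lam) (xy lam (βf lam)).1 (xy lam (βf lam)).2).mulVec u
            = (Complex.I * (lam : ℂ) * (νf lam : ℂ)) • u →
        ∃ κ : ℂ, u = κ • Sum.elim (fun j => ((δf lam * ξ j : ℝ) : ℂ) + wf lam j)
          (fun j => ((s1f lam : ℂ) + (s2f lam : ℂ) * Complex.I) * ((η j : ℝ) : ℂ)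
            + zf lam j)))
    -- the limiting frequency `ν₀`
    (ν₀ : ℝ) (hν₀ : ν₀ = (∑ j, a j) * Real.sqrt (∑ j, (ξ j) ^ 2 * η j)) :
    ∃ (δt s1t s2t : ℝ → ℝ) (wt zt : ℝ → Fin n → ℂ),
      (∀ lam ∈ Set.Ioc 0 lam₂,
        0 ≤ δt lam ∧
        (∑ j, (ξ j : ℂ) * wt lam j = 0) ∧ (∑ j, (η j : ℂ) * zt lam j = 0) ∧
        (∑ j, Complex.normSq (((δt lam : ℝ) : ℂ) + wt lam j))
          + (∑ j, Complex.normSq (((s1t lam : ℂ) + (s2t lam : ℂ) * Complex.I)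
              + zt lam j)) = 2 * n ∧
        Sum.elim (fun j => ((δt lam : ℝ) : ℂ) + wt lam j)
          (fun j => ((s1t lam : ℂ) + (s2t lam : ℂ) * Complex.I) + zt lam j) ≠ 0 ∧
        (Amat P Q b θ lam (βf lam) (xy lam (βf lam)).1 (xy lam (βf lam)).2).transpose.mulVec
            (Sum.elim (fun j => ((δt lam : ℝ) : ℂ) + wt lam j)
              (fun j => ((s1t lam : ℂ) + (s2t lam : ℂ) * Complex.I) + zt lam j))
          = (-(Complex.I * (lam : ℂ) * (νf lam : ℂ))) •
              Sum.elim (fun j => ((δt lam : ℝ) : ℂ) + wt lam j)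
                (fun j => ((s1t lam : ℂ) + (s2t lam : ℂ) * Complex.I) + zt lam j) ∧
        (∀ u : Fin n ⊕ Fin n → ℂ,
          (Amat P Q b θ lam (βf lam) (xy lam (βf lam)).1
              (xy lam (βf lam)).2).transpose.mulVec u
            = (-(Complex.I * (lam : ℂ) * (νf lam : ℂ))) • u →
          ∃ κ : ℂ, u = κ • Sum.elim (fun j => ((δt lam : ℝ) : ℂ) + wt lam j)
            (fun j => ((s1t lam : ℂ) + (s2t lam : ℂ) * Complex.I) + zt lam j))) ∧
      Filter.Tendsto δt (nhdsWithin 0 (Set.Ioi 0))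
        (nhds (Real.sqrt ((2 * ν₀ ^ 2 + 2) / (2 * ν₀ ^ 2 + 1)))) ∧
      Filter.Tendsto s1t (nhdsWithin 0 (Set.Ioi 0))
        (nhds (Real.sqrt ((2 * ν₀ ^ 2 + 2) / (2 * ν₀ ^ 2 + 1)) * ν₀ ^ 2 / (ν₀ ^ 2 + 1))) ∧
      Filter.Tendsto s2t (nhdsWithin 0 (Set.Ioi 0))
        (nhds (Real.sqrt ((2 * ν₀ ^ 2 + 2) / (2 * ν₀ ^ 2 + 1)) * ν₀ / (ν₀ ^ 2 + 1))) ∧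
      Filter.Tendsto wt (nhdsWithin 0 (Set.Ioi 0)) (nhds 0) ∧
      Filter.Tendsto zt (nhdsWithin 0 (Set.Ioi 0)) (nhds 0) := by
  have hn : 0 < n := Nat.pos_of_ne_zero (by rintro rfl; simp at hξsum)
  have : Nonempty (Fin n) := Fin.pos_iff_nonempty.1 hn
  have hS : 0 < ∑ j, ξ j ^ 2 * η j :=
    Finset.sum_pos (fun j _ => mul_pos (pow_pos (hξpos j) 2) (hηpos j)) Finset.univ_nonempty
  have hν₀pos : 0 < ν₀ :=
    hν₀ ▸ mul_pos (Finset.sum_pos (fun j _ => ha j) Finset.univ_nonempty) (Real.sqrt_pos.2 hS)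
  have hν₀x : ν₀ ^ 2 = ∑ j, η j * ((∑ i, a i) * ξ j) ^ 2 := by
    rw [hν₀, mul_pow, Real.sq_sqrt hS.le, Finset.mul_sum]
    exact Finset.sum_congr rfl fun j _ => by ring
  obtain ⟨u, hu⟩ := exists_normalized_adjoint_family hn heig
  have hlim := tendsto_adjointLimit hPirr hQirr hPess hQess hPcol hQcol hPξ hQη hξsum hηsum
    hθ.ne' hlam₂ hxyC1.continuousOn (fun β hβ => by rw [hxy0 β hβ]) hν₀pos hν₀x
    (fun l hl => ⟨(hpos l (Set.Ioc_subset_Icc_self hl)).2.2,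
      (hpos l (Set.Ioc_subset_Icc_self hl)).2.1⟩) fun l hl => ⟨(hu l hl).1.2.1, (hu l hl).2⟩
  obtain ⟨δt, s1t, s2t, wt, zt, hdec, hδt, hs1t, hs2t, hwt, hzt⟩ :=
    exists_decomposition_of_tendsto hξsum hηsum (fun l hl => (hu l hl).2.2) hlim
  refine ⟨δt, s1t, s2t, wt, zt, fun l hl => ?_, hδt, hs1t, hs2t, hwt, hzt⟩
  obtain ⟨hδ, hξw, hηz, hrec⟩ := hdec l hl
  obtain ⟨⟨hu0, hAu, hspan⟩, hnorm, -⟩ := hu l hl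
  rw [hrec]
  exact ⟨hδ, hξw, hηz, by simpa [Fintype.sum_sum_type, ← hrec] using hnorm, hu0, hAu, hspan⟩

/-- For `λ ∈ (0, λ₂]`, `-iλν_λ` is an eigenvalue of `A_{β_λ}(λ)ᵀ` with
one-dimensional eigenspace spanned by `(φ̃_λ, ψ̃_λ)` of the stated normalized
form, and as `λ → 0⁺` the data converge to
`(δ̃₀, s̃_{10}, s̃_{20}, 0, 0)`. -/
theorem stmt_8 (n : ℕ) (hn : 2 ≤ n)
    (P Q : Matrix (Fin n) (Fin n) ℝ) (a b ξ η : Fin n → ℝ) (θ : ℝ)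
    (ha : ∀ j, 0 < a j) (hb : ∀ j, 0 < b j) (hθ : 0 < θ)
    (hPirr : MatIrred P) (hQirr : MatIrred Q)
    (hPess : EssNonneg P) (hQess : EssNonneg Q)
    (hPcol : ZeroColSums P) (hQcol : ZeroColSums Q)
    (hξpos : PosVec ξ) (hηpos : PosVec η)
    (hPξ : P.mulVec ξ = 0) (hQη : Q.mulVec η = 0)
    (hξsum : ∑ j, ξ j = 1) (hηsum : ∑ j, η j = 1)
    (ε : ℝ) (hε : ε ∈ Set.Ioo (0 : ℝ) 1)
    -- the globally defined equilibrium family on `[0, δε] × B`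
    (δε : ℝ) (hδε : 0 < δε)
    (xy : ℝ → ℝ → (Fin n → ℝ) × (Fin n → ℝ))
    (hxyC1 : ContDiffOn ℝ 1 (fun p : ℝ × ℝ => xy p.1 p.2)
      (Set.Icc 0 δε ×ˢ Set.Icc ε (1 / ε)))
    (hxy : ∀ lam ∈ Set.Ioc 0 δε, ∀ β ∈ Set.Icc ε (1 / ε),
      PosVec (xy lam β).1 ∧ PosVec (xy lam β).2 ∧
      IsEquilib P Q a b θ lam β (xy lam β).1 (xy lam β).2 ∧
      (∀ x y : Fin n → ℝ, PosVec x → PosVec y →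
        IsEquilib P Q a b θ lam β x y → (x, y) = xy lam β))
    (hxy0 : ∀ β ∈ Set.Icc ε (1 / ε),
      xy 0 β = ((fun j => (∑ i, a i) * ξ j),
        (fun j => β * (∑ i, b i * ξ i) /
          ((∑ i, a i) * (∑ i, (ξ i) ^ 2 * η i)) * η j)))
    -- the family from the Hopf-eigenvalue theorem on `[0, λ₂]`
    (lam₂ : ℝ) (hlam₂ : lam₂ ∈ Set.Ioo 0 δε)
    (δf s1f s2f νf βf : ℝ → ℝ) (wf zf : ℝ → Fin n → ℂ)
    (hpos : ∀ lam ∈ Set.Icc 0 lam₂,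
      0 < δf lam ∧ 0 < νf lam ∧ βf lam ∈ Set.Icc ε (1 / ε))
    (heig : ∀ lam ∈ Set.Ioc 0 lam₂,
      Sum.elim (fun j => ((δf lam * ξ j : ℝ) : ℂ) + wf lam j)
          (fun j => ((s1f lam : ℂ) + (s2f lam : ℂ) * Complex.I) * ((η j : ℝ) : ℂ)
            + zf lam j) ≠ 0 ∧
      (Amat P Q b θ lam (βf lam) (xy lam (βf lam)).1 (xy lam (βf lam)).2).mulVec
          (Sum.elim (fun j => ((δf lam * ξ j : ℝ) : ℂ) + wf lam j)
            (fun j => ((s1f lam : ℂ) + (s2f lam : ℂ) * Complex.I) * ((η j : ℝ) : ℂ)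
              + zf lam j))
        = (Complex.I * (lam : ℂ) * (νf lam : ℂ)) •
            Sum.elim (fun j => ((δf lam * ξ j : ℝ) : ℂ) + wf lam j)
              (fun j => ((s1f lam : ℂ) + (s2f lam : ℂ) * Complex.I) * ((η j : ℝ) : ℂ)
                + zf lam j) ∧
      (∀ u : Fin n ⊕ Fin n → ℂ,
        (Amat P Q b θ lam (βf lam) (xy lam (βf lam)).1 (xy lam (βf lam)).2).mulVec u
            = (Complex.I * (lam : ℂ) * (νf lam : ℂ)) • u →
        ∃ κ : ℂ, u = κ • Sum.elim (fun j => ((δf lam * ξ j : ℝ) : ℂ) + wf lam j)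
          (fun j => ((s1f lam : ℂ) + (s2f lam : ℂ) * Complex.I) * ((η j : ℝ) : ℂ)
            + zf lam j)))
    -- the limiting frequency `ν₀`
    (ν₀ : ℝ) (hν₀ : ν₀ = (∑ j, a j) * Real.sqrt (∑ j, (ξ j) ^ 2 * η j)) :
    ∃ (δt s1t s2t : ℝ → ℝ) (wt zt : ℝ → Fin n → ℂ),
      (∀ lam ∈ Set.Ioc 0 lam₂,
        0 ≤ δt lam ∧
        (∑ j, (ξ j : ℂ) * wt lam j = 0) ∧ (∑ j, (η j : ℂ) * zt lam j = 0) ∧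
        (∑ j, Complex.normSq (((δt lam : ℝ) : ℂ) + wt lam j))
          + (∑ j, Complex.normSq (((s1t lam : ℂ) + (s2t lam : ℂ) * Complex.I)
              + zt lam j)) = 2 * n ∧
        Sum.elim (fun j => ((δt lam : ℝ) : ℂ) + wt lam j)
          (fun j => ((s1t lam : ℂ) + (s2t lam : ℂ) * Complex.I) + zt lam j) ≠ 0 ∧
        (Amat P Q b θ lam (βf lam) (xy lam (βf lam)).1 (xy lam (βf lam)).2).transpose.mulVec
            (Sum.elim (fun j => ((δt lam : ℝ) : ℂ) + wt lam j)
              (fun j => ((s1t lam : ℂ) + (s2t lam : ℂ) * Complex.I) + zt lam j))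
          = (-(Complex.I * (lam : ℂ) * (νf lam : ℂ))) •
              Sum.elim (fun j => ((δt lam : ℝ) : ℂ) + wt lam j)
                (fun j => ((s1t lam : ℂ) + (s2t lam : ℂ) * Complex.I) + zt lam j) ∧
        (∀ u : Fin n ⊕ Fin n → ℂ,
          (Amat P Q b θ lam (βf lam) (xy lam (βf lam)).1
              (xy lam (βf lam)).2).transpose.mulVec u
            = (-(Complex.I * (lam : ℂ) * (νf lam : ℂ))) • u →
          ∃ κ : ℂ, u = κ • Sum.elim (fun j => ((δt lam : ℝ) : ℂ) + wt lam j)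
            (fun j => ((s1t lam : ℂ) + (s2t lam : ℂ) * Complex.I) + zt lam j))) ∧
      Filter.Tendsto δt (nhdsWithin 0 (Set.Ioi 0))
        (nhds (Real.sqrt ((2 * ν₀ ^ 2 + 2) / (2 * ν₀ ^ 2 + 1)))) ∧
      Filter.Tendsto s1t (nhdsWithin 0 (Set.Ioi 0))
        (nhds (Real.sqrt ((2 * ν₀ ^ 2 + 2) / (2 * ν₀ ^ 2 + 1)) * ν₀ ^ 2 / (ν₀ ^ 2 + 1))) ∧
      Filter.Tendsto s2t (nhdsWithin 0 (Set.Ioi 0))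
        (nhds (Real.sqrt ((2 * ν₀ ^ 2 + 2) / (2 * ν₀ ^ 2 + 1)) * ν₀ / (ν₀ ^ 2 + 1))) ∧
      Filter.Tendsto wt (nhdsWithin 0 (Set.Ioi 0)) (nhds 0) ∧
      Filter.Tendsto zt (nhdsWithin 0 (Set.Ioi 0)) (nhds 0) :=
  stmt_8_general n P Q a b ξ η θ ha hθ hPirr hQirr hPess hQess hPcol hQcol hξpos hηpos hPξ hQη hξsum
    hηsum ε δε xy hxyC1 hxy0 lam₂ hlam₂ δf s1f s2f νf βf wf zf hpos heig ν₀ hν₀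
end

section
/- Let β₀ = 1 + (na)²(∑_{j=1}^n ξ_j³) be the limiting Hopf bifurcation value, denoted β₀^L when P is line-sum symmetric (∑_{k≠j} p_{jk} = ∑_{k≠j} p_{kj} for every j) and β₀^{NL} when P is not line-sum symmetric. Then β₀^L = 1 + a² and β₀^{NL} > 1 + a²; in particular β₀^L < β₀^{NL}. -/
open Finset

/-- Line-sum symmetry: for every `j`, the off-diagonal row sum equals the
off-diagonal column sum. -/
def LineSumSym {n : ℕ} (P : Matrix (Fin n) (Fin n) ℝ) : Prop :=
  ∀ j, ∑ k ∈ Finset.univ.erase j, P j k = ∑ k ∈ Finset.univ.erase j, P k j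

/-! With zero column sums, line-sum symmetry says that the row sums vanish too. A maximum
principle for the essentially nonnegative irreducible `P` then shows that the kernel vector `ξ`
is constant, and conversely a positive constant kernel vector forces zero row sums. Hence `P` is
line-sum symmetric exactly when `ξ` is uniform, where `n² ∑ ξⱼ³ = 1`; otherwise the strict Jensen
inequality for `x ↦ x³` gives `n² ∑ ξⱼ³ > 1`. -/

section PowerMean

variable {ι : Type*} [Fintype ι] {ξ : ι → ℝ}

theorem card_sq_mul_sum_pow_three_of_forall_eq (hsum : ∑ j, ξ j = 1)
    (hconst : ∀ j k, ξ j = ξ k) : (Fintype.card ι : ℝ) ^ 2 * ∑ j, ξ j ^ 3 = 1 := by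
  obtain ⟨j₀⟩ : Nonempty ι :=
    univ_nonempty_iff.1 (nonempty_of_sum_ne_zero (hsum ▸ one_ne_zero))
  simp only [hconst _ j₀, sum_const, card_univ, nsmul_eq_mul] at hsum ⊢
  linear_combination ((Fintype.card ι * ξ j₀) ^ 2 + Fintype.card ι * ξ j₀ + 1) * hsum

/-- Strict Jensen for `x ↦ x³`, uniform weights `N⁻¹` and points `N ξⱼ`. -/
theorem one_lt_card_sq_mul_sum_pow_three (hξ : ∀ j, 0 ≤ ξ j) (hsum : ∑ j, ξ j = 1)
    (hne : ∃ j k, ξ j ≠ ξ k) : 1 < (Fintype.card ι : ℝ) ^ 2 * ∑ j, ξ j ^ 3 := by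
  obtain ⟨j, k, hjk⟩ := hne
  have : Nonempty ι := ⟨j⟩
  set N : ℝ := (Fintype.card ι : ℝ)
  have hN : N ≠ 0 := Nat.cast_ne_zero.2 Fintype.card_ne_zero
  have hmean : (∑ j, N⁻¹ • (N * ξ j)) ^ 3 = 1 := by
    simp [smul_eq_mul, hN, hsum]
  have hcubes : ∑ j, N⁻¹ • (N * ξ j) ^ 3 = N ^ 2 * ∑ j, ξ j ^ 3 := by
    rw [mul_sum]
    refine sum_congr rfl fun j _ => ?_
    rw [smul_eq_mul]
    field_simp
  rw [← hmean, ← hcubes]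
  refine (strictConvexOn_pow (by norm_num)).map_sum_lt (fun _ _ => by positivity) ?_
    (fun i _ => ?_) ⟨j, mem_univ j, k, mem_univ k, ?_⟩
  · simp [N, hN]
  · have := hξ i
    simp only [Set.mem_Ici]
    positivity
  · simpa [hN] using hjk

end PowerMean

section CouplingMatrix

open Matrix

variable {n : ℕ} {P : Matrix (Fin n) (Fin n) ℝ} {ξ : Fin n → ℝ}

theorem lineSumSym_iff_rowSums_eq_zero (hcol : ZeroColSums P) :
    LineSumSym P ↔ ∀ j, ∑ k, P j k = 0 := by
  refine forall_congr' fun j => ?_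
  rw [← hcol j, ← sum_erase_add _ _ (mem_univ j),
    ← sum_erase_add _ (fun k => P k j) (mem_univ j), add_left_inj]

theorem EssNonneg.eq_of_forall_le (hess : EssNonneg P) {j k : Fin n}
    (hrow : ∑ l, P j l = 0) (hPξ : (P *ᵥ ξ) j = 0) (hmax : ∀ l, ξ l ≤ ξ j)
    (hjk : P j k ≠ 0) : ξ k = ξ j := by
  have hsum : ∑ l, P j l * (ξ l - ξ j) = 0 := by
    simp only [mul_sub, sum_sub_distrib, ← sum_mul, hrow, zero_mul, sub_zero]
    exact hPξ
  have hterm_nonpos : ∀ l ∈ univ, P j l * (ξ l - ξ j) ≤ 0 := fun l _ => by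
    rcases eq_or_ne j l with rfl | hjl
    · simp
    · exact mul_nonpos_of_nonneg_of_nonpos (hess j l hjl) (sub_nonpos.2 (hmax l))
  have hterm := (sum_eq_zero_iff_of_nonpos hterm_nonpos).1 hsum k (mem_univ k)
  exact sub_eq_zero.1 ((mul_eq_zero.1 hterm).resolve_left hjk)

theorem MatIrred.forall_eq_of_mulVec_eq_zero (hirr : MatIrred P) (hess : EssNonneg P)
    (hrow : ∀ j, ∑ k, P j k = 0) (hPξ : P *ᵥ ξ = 0) (j k : Fin n) : ξ j = ξ k := by
  obtain ⟨j₀, -, hj₀⟩ := univ.exists_max_image ξ ⟨j, mem_univ j⟩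
  suffices ∀ l, ξ l = ξ j₀ by rw [this j, this k]
  by_contra! ⟨l, hl⟩
  set S := univ.filter fun l => ξ l ≠ ξ j₀
  obtain ⟨i, hiS, m, hmS, him⟩ := hirr S ⟨l, by simpa [S]⟩ fun h =>
    (by simp [S] : j₀ ∉ S) (h ▸ mem_univ j₀)
  have hi : ξ i = ξ j₀ := by simpa [S] using hiS
  have hm := hess.eq_of_forall_le (hrow i) (congrFun hPξ i) (fun l => hi ▸ hj₀ l (mem_univ l)) him
  simp [S, hm, hi] at hmS

theorem lineSumSym_iff_forall_eq (hirr : MatIrred P) (hess : EssNonneg P)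
    (hcol : ZeroColSums P) (hξ : ∀ j, 0 < ξ j) (hPξ : P *ᵥ ξ = 0) :
    LineSumSym P ↔ ∀ j k, ξ j = ξ k := by
  rw [lineSumSym_iff_rowSums_eq_zero hcol]
  refine ⟨fun hrow => hirr.forall_eq_of_mulVec_eq_zero hess hrow hPξ, fun hconst j => ?_⟩
  have : ξ j * ∑ k, P j k = (P *ᵥ ξ) j := by
    simp only [mulVec, dotProduct, mul_sum]
    exact sum_congr rfl fun k _ => by rw [hconst j k, mul_comm]
  rw [hPξ, Pi.zero_apply] at this
  exact (mul_eq_zero.1 this).resolve_left (hξ j).ne'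

end CouplingMatrix

theorem stmt_14_general (n : ℕ) (a : ℝ) (ha : 0 < a)
    (P : Matrix (Fin n) (Fin n) ℝ)
    (hirr : MatIrred P) (hess : EssNonneg P) (hcol : ZeroColSums P)
    (ξ : Fin n → ℝ) (hξpos : ∀ j, 0 < ξ j) (hPξ : P.mulVec ξ = 0)
    (hξsum : ∑ j, ξ j = 1) :
    (LineSumSym P → 1 + ((n : ℝ) * a) ^ 2 * (∑ j, (ξ j) ^ 3) = 1 + a ^ 2) ∧
    (¬ LineSumSym P → 1 + a ^ 2 < 1 + ((n : ℝ) * a) ^ 2 * (∑ j, (ξ j) ^ 3)) := by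
  have hsym := lineSumSym_iff_forall_eq hirr hess hcol hξpos hPξ
  have hscale : ((n : ℝ) * a) ^ 2 * ∑ j, ξ j ^ 3 = a ^ 2 * ((n : ℝ) ^ 2 * ∑ j, ξ j ^ 3) := by
    ring
  have hcard : (Fintype.card (Fin n) : ℝ) = n := by rw [Fintype.card_fin]
  rw [hscale, add_right_inj, add_lt_add_iff_left]
  constructor
  · intro h
    rw [← hcard, card_sq_mul_sum_pow_three_of_forall_eq hξsum (hsym.1 h), mul_one]
  · intro h
    have hne : ∃ j k, ξ j ≠ ξ k := by simpa using mt hsym.2 h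
    have := one_lt_card_sq_mul_sum_pow_three (fun j => (hξpos j).le) hξsum hne
    rw [hcard] at this
    exact lt_mul_of_one_lt_right (by positivity) this

/-- The limiting Hopf bifurcation value `β₀ = 1 + (na)²(∑ ξⱼ³)` equals `1 + a²`
when the coupling matrix `P` is line-sum symmetric, and is strictly larger than
`1 + a²` when `P` is not line-sum symmetric; in particular `β₀ᴸ < β₀ᴺᴸ`. -/
theorem stmt_14 (n : ℕ) (hn : 2 ≤ n) (a : ℝ) (ha : 0 < a)
    (P : Matrix (Fin n) (Fin n) ℝ)
    (hirr : MatIrred P) (hess : EssNonneg P) (hcol : ZeroColSums P)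
    (ξ : Fin n → ℝ) (hξpos : ∀ j, 0 < ξ j) (hPξ : P.mulVec ξ = 0)
    (hξsum : ∑ j, ξ j = 1) :
    (LineSumSym P → 1 + ((n : ℝ) * a) ^ 2 * (∑ j, (ξ j) ^ 3) = 1 + a ^ 2) ∧
    (¬ LineSumSym P → 1 + a ^ 2 < 1 + ((n : ℝ) * a) ^ 2 * (∑ j, (ξ j) ^ 3)) :=
  stmt_14_general n a ha P hirr hess hcol ξ hξpos hPξ hξsum
end
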